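/- arXiv:1612.06575 — 9 statements merged into one kernel-verified Lean document; each statement's English description precedes it below -/
import Mathlib

section
/- Let f, g : [0,∞) → ℝ be continuous functions. If for all t ≥ 0 the right-hand lower Dini derivative D₊f(t) := liminf_{τ→0+} (f(t+τ) - f(t))/τ satisfies D₊f(t) ≤ -g(t), then for all t ≥ 0 we have f(t) - f(0) ≤ -∫₀ᵗ g(s) ds. -/
open Filter Set

/-- Class `K` comparison functions on `[0,∞)`. -/
def ClassK (f : ℝ → ℝ) : Prop :=
  ContinuousOn f (Ici 0) ∧ StrictMonoOn f (Ici 0) ∧ f 0 = 0 ∧ ∀ r, 0 ≤ r → 0 ≤ f r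

/-- Class `K∞` comparison functions. -/
def ClassKInf (f : ℝ → ℝ) : Prop :=
  ClassK f ∧ ∀ M : ℝ, ∃ r, 0 ≤ r ∧ M < f r

/-- Class `KL` comparison functions. -/
def ClassKL (β : ℝ → ℝ → ℝ) : Prop :=
  (∀ t, 0 ≤ t → ClassK (fun r => β r t)) ∧
  ∀ r, 0 < r → ContinuousOn (β r) (Ici 0) ∧ AntitoneOn (β r) (Ici 0) ∧
    Tendsto (β r) atTop (nhds 0)

/-- Right-hand lower Dini derivative. -/
noncomputable def dini (f : ℝ → ℝ) (t : ℝ) : ℝ :=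
  liminf (fun τ => (f (t + τ) - f t) / τ) (nhdsWithin 0 (Ioi 0))

/-!
Put `φ x = f x + ∫₀ˣ g - ε x` with `ε > 0`. At a point `x` from which `φ` increases strictly, the
right difference quotients of `f` are eventually `≥ ε/2 - g x > D₊ f x`, which is consistent only
if they, and so those of `φ`, tend to `+∞`. Their liminf is then `+∞`, which `dini` records as the junk value `0`, so this
case cannot be excluded: the real work is to show that it does not let `φ` increase.

If `φ 0 < φ t`, the last time `ψ c` at which `φ ≤ c` is strictly increasing in `c ∈ (φ 0, φ t)`,
`φ` increases strictly from each `ψ c`, and so `ψ` has right derivative `0` everywhere, the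
reciprocal of the infinite right slope of `φ`. By Baire's theorem a monotone function whose right
difference quotients are eventually `≤ 1` at every point is Lipschitz on some subinterval, where a
continuous function with zero right derivative is constant: a contradiction. Hence `φ t ≤ φ 0`;
let `ε → 0`.
-/

open Topology

theorem exists_Ioo_subset_closure_of_Ioo_subset_iUnion {ι : Type*} [Countable ι] {A B : ℝ}
    (hAB : A < B) {F : ι → Set ℝ} (hF : Ioo A B ⊆ ⋃ i, F i) :
    ∃ i p q, p < q ∧ Ioo p q ⊆ Ioo A B ∩ closure (F i) := by
  obtain ⟨i₀, -⟩ := mem_iUnion.1 (hF (nonempty_Ioo.2 hAB).some_mem)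
  have hcover : ⋃ i, (closure (F i) ∪ (Ioo A B)ᶜ) = univ := by
    refine eq_univ_of_forall fun c => ?_
    by_cases hc : c ∈ Ioo A B
    · obtain ⟨i, hi⟩ := mem_iUnion.1 (hF hc)
      exact mem_iUnion.2 ⟨i, .inl (subset_closure hi)⟩
    · exact mem_iUnion.2 ⟨i₀, .inr hc⟩
  obtain ⟨x, hxAB, hx⟩ := (dense_iUnion_interior_of_closed
    (fun i => isClosed_closure.union isOpen_Ioo.isClosed_compl) hcover).inter_open_nonempty
    _ isOpen_Ioo (nonempty_Ioo.2 hAB)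
  obtain ⟨i, hi⟩ := mem_iUnion.1 hx
  obtain ⟨p, q, ⟨hpx, hxq⟩, hpq⟩ := mem_nhds_iff_exists_Ioo_subset.1
    (inter_mem (isOpen_interior.mem_nhds hi) (isOpen_Ioo.mem_nhds hxAB))
  refine ⟨i, p, q, hpx.trans hxq, fun y hy => ⟨(hpq hy).2, ?_⟩⟩
  exact (interior_subset (hpq hy).1).resolve_right (not_not.2 (hpq hy).2)

theorem MonotoneOn.exists_lipschitzOnWith_Ioo {ψ : ℝ → ℝ} {A B : ℝ} (hAB : A < B)
    (hψ : MonotoneOn ψ (Ioo A B))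
    (h : ∀ c ∈ Ioo A B, ∀ᶠ c' in 𝓝[>] c, ψ c' - ψ c ≤ c' - c) :
    ∃ p q, p < q ∧ Ioo p q ⊆ Ioo A B ∧ LipschitzOnWith 1 ψ (Ioo p q) := by
  set F : ℕ → Set ℝ := fun n => {c | ∀ c' ∈ Ioo c (c + 1 / (n + 1)), ψ c' - ψ c ≤ c' - c}
  have hcover : Ioo A B ⊆ ⋃ n, F n := by
    intro c hc
    obtain ⟨u, hu, hsub⟩ := mem_nhdsGT_iff_exists_Ioo_subset.1 (h c hc)
    obtain ⟨n, hn⟩ := exists_nat_one_div_lt (sub_pos.2 (mem_Ioi.1 hu))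
    exact mem_iUnion.2 ⟨n, fun c' hc' => hsub ⟨hc'.1, by linarith [hc'.2]⟩⟩
  obtain ⟨n, p, q₀, hpq₀, hsub⟩ := exists_Ioo_subset_closure_of_Ioo_subset_iUnion hAB hcover
  set q := min q₀ (p + 1 / (n + 1))
  have hq : p < q ∧ q ≤ q₀ ∧ q ≤ p + 1 / (n + 1) :=
    ⟨lt_min hpq₀ (lt_add_of_pos_right _ (by positivity)), min_le_left _ _, min_le_right _ _⟩
  have hpqAB : Ioo p q ⊆ Ioo A B := fun y hy => (hsub ⟨hy.1, hy.2.trans_le hq.2.1⟩).1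
  have hpqF : Ioo p q ⊆ closure (F n) := fun y hy => (hsub ⟨hy.1, hy.2.trans_le hq.2.1⟩).2
  have hstep : ∀ y ∈ Ioo p q, ∀ z ∈ Ioo p q, y ≤ z → ψ z - ψ y ≤ z - y := by
    intro y hy z hz hyz
    refine le_of_forall_pos_le_add fun η hη => ?_
    set l := max p (y - η)
    have hl : p ≤ l ∧ y - η ≤ l ∧ l < y :=
      ⟨le_max_left _ _, le_max_right _ _, max_lt hy.1 (by linarith)⟩
    have hmid : (l + y) / 2 ∈ Ioo l y := ⟨by linarith, by linarith⟩
    obtain ⟨c, hcF, hlc, hcy⟩ := (closure_inter_open_nonempty_iff isOpen_Ioo).1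
      ⟨_, hpqF ⟨by linarith [hmid.1], by linarith [hy.2, hmid.2]⟩, hmid⟩
    have hcz := hcF z ⟨by linarith, by linarith [hz.2]⟩
    have hcy' := hψ (hpqAB ⟨by linarith, hcy.trans hy.2⟩) (hpqAB hy) hcy.le
    linarith
  have hdist : ∀ y ∈ Ioo p q, ∀ z ∈ Ioo p q, y ≤ z → dist (ψ y) (ψ z) ≤ dist y z := by
    intro y hy z hz hyz
    rw [dist_comm, Real.dist_eq, dist_comm, Real.dist_eq, abs_of_nonneg (sub_nonneg.2 hyz),
      abs_of_nonneg (sub_nonneg.2 (hψ (hpqAB hy) (hpqAB hz) hyz))]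
    exact hstep y hy z hz hyz
  refine ⟨p, q, hq.1, hpqAB, LipschitzOnWith.of_dist_le_mul fun y hy z hz => ?_⟩
  rw [NNReal.coe_one, one_mul]
  rcases le_total y z with hyz | hzy
  · exact hdist y hy z hz hyz
  · rw [dist_comm, dist_comm y]
    exact hdist z hz y hy hzy

theorem StrictMonoOn.exists_not_hasDerivWithinAt_Ici_zero {ψ : ℝ → ℝ} {A B : ℝ} (hAB : A < B)
    (hψ : StrictMonoOn ψ (Ioo A B)) : ∃ c ∈ Ioo A B, ¬HasDerivWithinAt ψ 0 (Ici c) c := by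
  by_contra! h
  have hslope : ∀ c ∈ Ioo A B, ∀ᶠ c' in 𝓝[>] c, ψ c' - ψ c ≤ c' - c := by
    intro c hc
    have := (hasDerivWithinAt_iff_tendsto_slope' self_notMem_Ioi).1 (h c hc).Ioi_of_Ici
    filter_upwards [this.eventually (gt_mem_nhds one_pos), self_mem_nhdsWithin] with c' h1 h2
    rw [slope_def_field, div_lt_one (sub_pos.2 h2)] at h1
    exact h1.le
  obtain ⟨p, q, hpq, hsub, hlip⟩ := hψ.monotoneOn.exists_lipschitzOnWith_Ioo hAB hslope
  have hIcc : Icc ((2 * p + q) / 3) ((p + 2 * q) / 3) ⊆ Ioo p q :=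
    Icc_subset_Ioo (by linarith) (by linarith)
  have hconst := constant_of_has_deriv_right_zero (hlip.continuousOn.mono hIcc)
    (fun x hx => h x (hsub (hIcc (Ico_subset_Icc_self hx)))) _ (right_mem_Icc.2 (by linarith))
  exact (hψ (hsub (hIcc (left_mem_Icc.2 (by linarith)))) (hsub (hIcc (right_mem_Icc.2
    (by linarith)))) (by linarith)).ne' hconst

noncomputable def lastTimeLE (φ : ℝ → ℝ) (a b c : ℝ) : ℝ :=
  sSup (Icc a b ∩ φ ⁻¹' Iic c)

section lastTimeLE

variable {φ : ℝ → ℝ} {a b c : ℝ}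

theorem lastTimeLE_mem (hφ : ContinuousOn φ (Icc a b)) (hab : a ≤ b) (hc : φ a ≤ c) :
    lastTimeLE φ a b c ∈ Icc a b ∩ φ ⁻¹' Iic c :=
  (isCompact_Icc.of_isClosed_subset (hφ.preimage_isClosed_of_isClosed isClosed_Icc isClosed_Iic)
    inter_subset_left).sSup_mem ⟨a, left_mem_Icc.2 hab, hc⟩

theorem lt_apply_of_lastTimeLE_lt {y : ℝ} (hy : y ∈ Icc a b) (hlt : lastTimeLE φ a b c < y) :
    c < φ y :=
  not_le.1 fun hle => hlt.not_ge (le_csSup (bddAbove_Icc.mono inter_subset_left) ⟨hy, hle⟩)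

theorem apply_lastTimeLE (hφ : ContinuousOn φ (Icc a b)) (hab : a ≤ b)
    (hc : c ∈ Icc (φ a) (φ b)) : φ (lastTimeLE φ a b c) = c := by
  obtain ⟨⟨hax, hxb⟩, hxc⟩ := lastTimeLE_mem hφ hab hc.1
  obtain ⟨y, ⟨hxy, hyb⟩, hyc⟩ :=
    intermediate_value_Icc hxb (hφ.mono (Icc_subset_Icc_left hax)) ⟨hxc, hc.2⟩
  rcases hxy.eq_or_lt with rfl | hlt
  · exact hyc
  · exact absurd hyc (lt_apply_of_lastTimeLE_lt ⟨hax.trans hxy, hyb⟩ hlt).ne'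

theorem lastTimeLE_lt_right (hφ : ContinuousOn φ (Icc a b)) (hab : a ≤ b)
    (hc : c ∈ Ico (φ a) (φ b)) : lastTimeLE φ a b c < b := by
  obtain ⟨⟨-, hxb⟩, hxc⟩ := lastTimeLE_mem hφ hab hc.1
  exact hxb.lt_of_ne fun h => (hxc.trans_lt hc.2).ne (congrArg φ h)

theorem strictMonoOn_lastTimeLE (hφ : ContinuousOn φ (Icc a b)) (hab : a ≤ b) :
    StrictMonoOn (lastTimeLE φ a b) (Icc (φ a) (φ b)) := by
  intro c hc c' hc' hlt
  refine lt_of_le_of_ne (csSup_le_csSup (bddAbove_Icc.mono inter_subset_left)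
    ⟨a, left_mem_Icc.2 hab, hc.1⟩ (inter_subset_inter_right _ (preimage_mono
      (Iic_subset_Iic.2 hlt.le)))) fun h => hlt.ne ?_
  rw [← apply_lastTimeLE hφ hab hc, h, apply_lastTimeLE hφ hab hc']

theorem tendsto_lastTimeLE_nhdsGT (hφ : ContinuousOn φ (Icc a b)) (hab : a ≤ b)
    (hc : c ∈ Ico (φ a) (φ b)) :
    Tendsto (lastTimeLE φ a b) (𝓝[>] c) (𝓝[>] (lastTimeLE φ a b c)) := by
  set x := lastTimeLE φ a b c
  have hgt : ∀ᶠ c' in 𝓝[>] c, x < lastTimeLE φ a b c' := by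
    filter_upwards [Ioo_mem_nhdsGT hc.2] with c' hc'
    exact strictMonoOn_lastTimeLE hφ hab (Ico_subset_Icc_self hc)
      ⟨hc.1.trans hc'.1.le, hc'.2.le⟩ hc'.1
  refine tendsto_nhdsWithin_iff.2 ⟨tendsto_order.2 ⟨fun l hl => hgt.mono fun _ h => hl.trans h,
    fun u hu => ?_⟩, hgt⟩
  have hmem : ∀ᶠ c' in 𝓝[>] c, lastTimeLE φ a b c' ∈ Icc a b ∩ φ ⁻¹' Iic c' :=
    eventually_nhdsWithin_of_forall fun c' hc' => lastTimeLE_mem hφ hab (hc.1.trans hc'.le)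
  have hau : a ≤ u := (lastTimeLE_mem hφ hab hc.1).1.1.trans hu.le
  by_cases hub : u ≤ b
  · obtain ⟨z, hz, hmin⟩ := isCompact_Icc.exists_isMinOn (nonempty_Icc.2 hub)
      (hφ.mono (Icc_subset_Icc_left hau))
    have hcz : c < φ z := lt_apply_of_lastTimeLE_lt ⟨hau.trans hz.1, hz.2⟩ (hu.trans_le hz.1)
    filter_upwards [hmem, Ioo_mem_nhdsGT hcz] with c' hc'mem hc'
    exact not_le.1 fun hu' =>
      (hmin ⟨hu', hc'mem.1.2⟩).not_gt (lt_of_le_of_lt hc'mem.2 hc'.2)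
  · filter_upwards [hmem] with c' hc'
    exact hc'.1.2.trans_lt (not_le.1 hub)

theorem hasDerivWithinAt_lastTimeLE (hφ : ContinuousOn φ (Icc a b)) (hab : a ≤ b)
    (hc : c ∈ Ico (φ a) (φ b))
    (hslope : Tendsto (slope φ (lastTimeLE φ a b c)) (𝓝[>] (lastTimeLE φ a b c)) atTop) :
    HasDerivWithinAt (lastTimeLE φ a b) 0 (Ici c) c := by
  refine ((hasDerivWithinAt_iff_tendsto_slope' self_notMem_Ioi).2 ?_).Ici_of_Ioi
  refine ((hslope.comp (tendsto_lastTimeLE_nhdsGT hφ hab hc)).inv_tendsto_atTop).congr' ?_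
  filter_upwards [Ioo_mem_nhdsGT hc.2] with c' hc'
  simp only [Pi.inv_apply, Function.comp_apply, slope_def_field, inv_div,
    apply_lastTimeLE hφ hab (Ico_subset_Icc_self hc),
    apply_lastTimeLE hφ hab ⟨hc.1.trans hc'.1.le, hc'.2.le⟩]

end lastTimeLE

theorem ContinuousOn.le_of_tendsto_slope_atTop {φ : ℝ → ℝ} {a b : ℝ} (hab : a ≤ b)
    (hφ : ContinuousOn φ (Icc a b))
    (hslope : ∀ x ∈ Ico a b, (∀ y ∈ Ioc x b, φ x < φ y) →
      Tendsto (slope φ x) (𝓝[>] x) atTop) :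
    φ b ≤ φ a := by
  by_contra! hba
  obtain ⟨c, hc, hnot⟩ := ((strictMonoOn_lastTimeLE hφ hab).mono Ioo_subset_Icc_self)
    |>.exists_not_hasDerivWithinAt_Ici_zero hba
  have hc' : c ∈ Ico (φ a) (φ b) := Ioo_subset_Ico_self hc
  obtain ⟨⟨hax, -⟩, -⟩ := lastTimeLE_mem hφ hab hc'.1
  refine hnot (hasDerivWithinAt_lastTimeLE hφ hab hc' (hslope _
    ⟨hax, lastTimeLE_lt_right hφ hab hc'⟩ fun y hy => ?_))
  rw [apply_lastTimeLE hφ hab (Ico_subset_Icc_self hc')]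
  exact lt_apply_of_lastTimeLE_lt ⟨hax.trans hy.1.le, hy.2⟩ hy.1

theorem le_liminf_of_not_tendsto_atTop {α ι : Type*} [ConditionallyCompleteLinearOrder α]
    {l : Filter ι} {u : ι → α} {a : α} (hu : ¬Tendsto u l atTop) (ha : ∀ᶠ i in l, a ≤ u i) :
    a ≤ liminf u l := by
  simp only [tendsto_atTop, not_forall, not_eventually, not_le] at hu
  obtain ⟨b, hb⟩ := hu
  exact le_liminf_of_le (IsCoboundedUnder.of_frequently_le (hb.mono fun _ => le_of_lt)) ha

theorem dini_eq_liminf_slope (f : ℝ → ℝ) (t : ℝ) :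
    dini f t = liminf (slope f t) (𝓝[>] t) := by
  have h : (fun τ => (f (t + τ) - f t) / τ) = slope f t ∘ (t + ·) := by
    ext τ
    simp [slope_def_field]
  rw [dini, h, liminf_comp, map_add_left_nhdsGT, add_zero]

theorem tendsto_slope_add_atTop_of_dini_lt {f F : ℝ → ℝ} {x L : ℝ}
    (hF : Tendsto (slope F x) (𝓝[>] x) (𝓝 L)) (hdini : dini f x < -L)
    (hpos : ∀ᶠ y in 𝓝[>] x, 0 < slope (f + F) x y) :
    Tendsto (slope (f + F) x) (𝓝[>] x) atTop := by
  have hsplit : slope (f + F) x = slope f x + slope F x := by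
    ext y
    simp only [slope_def_field, Pi.add_apply]
    ring
  rw [hsplit] at hpos ⊢
  refine Tendsto.atTop_add ?_ hF
  by_contra hf
  obtain ⟨δ, hδ, hδL⟩ : ∃ δ, 0 < δ ∧ dini f x < -L - δ :=
    ⟨(-L - dini f x) / 2, by linarith, by linarith⟩
  have hlow : ∀ᶠ y in 𝓝[>] x, -L - δ ≤ slope f x y := by
    filter_upwards [hpos, hF.eventually (gt_mem_nhds (show L < L + δ by linarith))]
      with y hy hFy
    simp only [Pi.add_apply] at hy
    linarith
  have := le_liminf_of_not_tendsto_atTop hf hlow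
  rw [← dini_eq_liminf_slope] at this
  linarith

theorem sub_le_neg_integral_add_mul {f g : ℝ → ℝ} (hf : ContinuousOn f (Ici 0))
    (hg : ContinuousOn g (Ici 0)) (h : ∀ t, 0 ≤ t → dini f t ≤ -g t) {t ε : ℝ} (ht : 0 ≤ t)
    (hε : 0 < ε) : f t - f 0 ≤ -(∫ s in (0 : ℝ)..t, g s) + ε * t := by
  set F : ℝ → ℝ := fun x => (∫ s in (0 : ℝ)..x, g s) - ε * x
  have hgint : ∀ x, 0 ≤ x → IntervalIntegrable g MeasureTheory.volume 0 x := fun x hx =>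
    (hg.mono (by rw [uIcc_of_le hx]; exact Icc_subset_Ici_self)).intervalIntegrable
  have hF : ∀ x, 0 ≤ x → Tendsto (slope F x) (𝓝[>] x) (𝓝 (g x - ε)) := by
    intro x hx
    have hG := intervalIntegral.integral_hasDerivWithinAt_right (hgint x hx) (s := Ici x)
      ((hg.mono (Ioi_subset_Ici hx)).stronglyMeasurableAtFilter_nhdsWithin measurableSet_Ioi x)
      ((hg x hx).mono (Ioi_subset_Ici hx))
    have := (hG.sub ((hasDerivWithinAt_id x (Ici x)).const_mul ε)).Ioi_of_Ici
    rw [mul_one] at this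
    exact (hasDerivWithinAt_iff_tendsto_slope' self_notMem_Ioi).1 this
  have hφ : ContinuousOn (f + F) (Icc 0 t) := by
    refine (hf.mono Icc_subset_Ici_self).add (ContinuousOn.sub ?_ (by fun_prop))
    simpa only [uIcc_of_le ht] using
      intervalIntegral.continuousOn_primitive_interval' (hgint t ht) left_mem_uIcc
  have hmono := hφ.le_of_tendsto_slope_atTop ht fun x hx hrise =>
    tendsto_slope_add_atTop_of_dini_lt (hF x hx.1) (by linarith [h x hx.1])
      (by filter_upwards [Ioc_mem_nhdsGT hx.2] with y hy
          exact (slope_pos_iff_of_le hy.1.le).2 (hrise y hy))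
  simp only [Pi.add_apply, F, intervalIntegral.integral_same, mul_zero] at hmono
  linarith

/-- If `D₊ f(t) ≤ -g(t)` for all `t ≥ 0`, then `f(t) - f(0) ≤ -∫₀ᵗ g`. -/
theorem dini_integral_bound (f g : ℝ → ℝ)
    (hf : ContinuousOn f (Ici 0)) (hg : ContinuousOn g (Ici 0))
    (h : ∀ t, 0 ≤ t → dini f t ≤ -g t) :
    ∀ t, 0 ≤ t → f t - f 0 ≤ -∫ s in (0:ℝ)..t, g s := by
  intro t ht
  have hlim : Tendsto (fun ε => -(∫ s in (0 : ℝ)..t, g s) + ε * t) (𝓝[>] 0)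
      (𝓝 (-∫ s in (0 : ℝ)..t, g s)) := by
    have hcont : Continuous fun ε : ℝ => -(∫ s in (0 : ℝ)..t, g s) + ε * t := by fun_prop
    simpa using (hcont.tendsto 0).mono_left nhdsWithin_le_nhds
  exact ge_of_tendsto hlim (eventually_nhdsWithin_of_forall fun ε hε =>
    sub_le_neg_integral_add_mul hf hg h ht hε)
end

section
/- For every function α of class K∞ there exists a function ρ of class K∞ such that ρ(s) ≤ α(s) for all s ≥ 0 and ρ is globally Lipschitz with Lipschitz constant 1, i.e. |ρ(s₁) - ρ(s₂)| ≤ |s₁ - s₂| for all s₁, s₂ ≥ 0. -/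
open Filter Set

/-! Take `ρ s = min_{t ∈ [0,s]} (α t + (s - t))`, the largest function below `α` whose increments
are at most those of the identity. A minimiser `t` of the problem at `s` gives the lower bounds:
`ρ s ≥ α t ≥ 0`, and `ρ` still increases strictly, since moving from `s₁` to `s₂ > s₁` either
raises the slack `s - t` (if `t ≤ s₁`) or forces `α t > α s₁ ≥ ρ s₁` (if `t > s₁`). -/

noncomputable def lipschitzMinorant (α : ℝ → ℝ) (s : ℝ) : ℝ :=
  sInf ((fun t => s - t + α t) '' Icc 0 s)

section LipschitzMinorant

variable {α : ℝ → ℝ} {s t : ℝ}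

theorem lipschitzMinorant_zero (α : ℝ → ℝ) : lipschitzMinorant α 0 = α 0 := by
  simp [lipschitzMinorant]

theorem isCompact_lipschitzMinorant_candidates (hc : ContinuousOn α (Ici 0)) (s : ℝ) :
    IsCompact ((fun t => s - t + α t) '' Icc 0 s) :=
  isCompact_Icc.image_of_continuousOn <|
    (continuousOn_const.sub continuousOn_id).add (hc.mono Icc_subset_Ici_self)

theorem lipschitzMinorant_le (hc : ContinuousOn α (Ici 0)) (ht : t ∈ Icc 0 s) :
    lipschitzMinorant α s ≤ s - t + α t :=
  csInf_le (isCompact_lipschitzMinorant_candidates hc s).bddBelow (mem_image_of_mem _ ht)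

theorem exists_eq_lipschitzMinorant (hc : ContinuousOn α (Ici 0)) (hs : 0 ≤ s) :
    ∃ t ∈ Icc 0 s, s - t + α t = lipschitzMinorant α s :=
  (isCompact_lipschitzMinorant_candidates hc s).sInf_mem ⟨_, mem_image_of_mem _ ⟨hs, le_rfl⟩⟩

theorem lipschitzMinorant_le_self (hc : ContinuousOn α (Ici 0)) (hs : 0 ≤ s) :
    lipschitzMinorant α s ≤ α s := by
  simpa using lipschitzMinorant_le hc ⟨hs, le_rfl⟩

theorem min_sub_le_lipschitzMinorant (hc : ContinuousOn α (Ici 0)) (hmono : MonotoneOn α (Ici 0))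
    (hpos : ∀ r, 0 ≤ r → 0 ≤ α r) {r : ℝ} (hr : 0 ≤ r) (hrs : r ≤ s) :
    min (s - r) (α r) ≤ lipschitzMinorant α s := by
  obtain ⟨t, ⟨ht0, hts⟩, hmin⟩ := exists_eq_lipschitzMinorant hc (hr.trans hrs)
  rw [← hmin]
  rcases le_total t r with htr | hrt
  · linarith [min_le_left (s - r) (α r), hpos t ht0]
  · linarith [min_le_right (s - r) (α r), hmono hr ht0 hrt]

theorem lipschitzMinorant_nonneg (hc : ContinuousOn α (Ici 0)) (hpos : ∀ r, 0 ≤ r → 0 ≤ α r)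
    (hs : 0 ≤ s) : 0 ≤ lipschitzMinorant α s := by
  obtain ⟨t, ⟨ht0, hts⟩, hmin⟩ := exists_eq_lipschitzMinorant hc hs
  linarith [hpos t ht0]

theorem lipschitzMinorant_strictMonoOn (hc : ContinuousOn α (Ici 0))
    (hmono : StrictMonoOn α (Ici 0)) : StrictMonoOn (lipschitzMinorant α) (Ici 0) := by
  intro s₁ hs₁ s₂ hs₂ hlt
  obtain ⟨t, ⟨ht0, hts⟩, hmin⟩ := exists_eq_lipschitzMinorant hc hs₂
  rw [← hmin]
  rcases le_or_gt t s₁ with hts₁ | hs₁t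
  · linarith [lipschitzMinorant_le hc ⟨ht0, hts₁⟩]
  · linarith [lipschitzMinorant_le_self hc hs₁, hmono hs₁ ht0 hs₁t]

theorem lipschitzMinorant_le_add_sub (hc : ContinuousOn α (Ici 0)) {s₁ s₂ : ℝ} (hs₁ : 0 ≤ s₁)
    (hle : s₁ ≤ s₂) : lipschitzMinorant α s₂ ≤ lipschitzMinorant α s₁ + (s₂ - s₁) := by
  obtain ⟨t, ⟨ht0, hts⟩, hmin⟩ := exists_eq_lipschitzMinorant hc hs₁
  linarith [lipschitzMinorant_le hc ⟨ht0, hts.trans hle⟩]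

theorem lipschitzOnWith_lipschitzMinorant (hc : ContinuousOn α (Ici 0))
    (hmono : StrictMonoOn α (Ici 0)) : LipschitzOnWith 1 (lipschitzMinorant α) (Ici 0) := by
  refine LipschitzOnWith.of_le_add_mul 1 fun x hx y hy => ?_
  rw [NNReal.coe_one, one_mul, Real.dist_eq]
  rcases le_total x y with hxy | hyx
  · linarith [(lipschitzMinorant_strictMonoOn hc hmono).monotoneOn hx hy hxy, abs_nonneg (x - y)]
  · linarith [lipschitzMinorant_le_add_sub hc hy hyx, le_abs_self (x - y)]

theorem exists_lt_lipschitzMinorant (hc : ContinuousOn α (Ici 0)) (hmono : MonotoneOn α (Ici 0))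
    (hpos : ∀ r, 0 ≤ r → 0 ≤ α r) (hunb : ∀ M : ℝ, ∃ r, 0 ≤ r ∧ M < α r) (M : ℝ) :
    ∃ s, 0 ≤ s ∧ M < lipschitzMinorant α s := by
  obtain ⟨r, hr, hMr⟩ := hunb M
  have hslack : 0 ≤ |M| + 1 := by positivity
  refine ⟨r + (|M| + 1), add_nonneg hr hslack, ?_⟩
  have hmin := min_sub_le_lipschitzMinorant hc hmono hpos hr (le_add_of_nonneg_right hslack)
  rw [add_sub_cancel_left] at hmin
  exact (lt_min (by linarith [le_abs_self M]) hMr).trans_le hmin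

end LipschitzMinorant

/-- For every `α ∈ K∞` there is `ρ ∈ K∞` below `α` with unit Lipschitz constant. -/
theorem exists_lipschitz_classKInf_lower_bound (α : ℝ → ℝ) (hα : ClassKInf α) :
    ∃ ρ : ℝ → ℝ, ClassKInf ρ ∧ (∀ s, 0 ≤ s → ρ s ≤ α s) ∧
      ∀ s₁ s₂, 0 ≤ s₁ → 0 ≤ s₂ → |ρ s₁ - ρ s₂| ≤ |s₁ - s₂| := by
  obtain ⟨⟨hc, hmono, h0, hpos⟩, hunb⟩ := hα
  have hlip := lipschitzOnWith_lipschitzMinorant hc hmono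
  have hK : ClassK (lipschitzMinorant α) :=
    ⟨hlip.continuousOn, lipschitzMinorant_strictMonoOn hc hmono,
      by rw [lipschitzMinorant_zero, h0],
      fun s hs => lipschitzMinorant_nonneg hc hpos hs⟩
  refine ⟨lipschitzMinorant α, ⟨hK, exists_lt_lipschitzMinorant hc hmono.monotoneOn hpos hunb⟩,
    fun s hs => lipschitzMinorant_le_self hc hs, fun s₁ s₂ h₁ h₂ => ?_⟩
  simpa [Real.dist_eq] using hlip.dist_le_mul s₁ h₁ s₂ h₂
end

section
/- Let β be a class-KL function. Then there exist class-K∞ functions α₁ and α₂ such that β(r, t) ≤ α₂(α₁(r) e^{-t}) for all r ≥ 0 and all t ≥ 0. -/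
/-!
Choose `α₁ ∈ K∞` growing so fast that for `r ≥ 1` the function `β r` has decayed below `1 / r`
by the time `α₁ r * exp (-t)` drops to `exp r`; sampling `β` at integer radii suffices, since `β`
is monotone in `r`. With `g r t = α₁ r * exp (-t)`, the function `β` is then bounded on every
sublevel set `{g ≤ v}` and tends to `0` uniformly as `g → 0`, so
`φ v = sup {β r t | g r t ≤ v}` is monotone, finite and continuous at `0` with `φ 0 = 0`,
and `β ≤ φ ∘ g`. Any such `φ` is dominated by the `K∞` function `v ↦ v + ∫ s in 1..2, φ (v * s)`,
which is `α₂`.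
-/

open Filter Set

open intervalIntegral Topology

noncomputable def dilationAverage (φ : ℝ → ℝ) (v : ℝ) : ℝ :=
  ∫ s in (1 : ℝ)..2, φ (v * s)

namespace Monotone

variable {φ : ℝ → ℝ} (hφ : Monotone φ)
include hφ

theorem intervalIntegrable_comp_mul {v : ℝ} (hv : 0 ≤ v) (a b : ℝ) :
    IntervalIntegrable (fun s => φ (v * s)) MeasureTheory.volume a b :=
  (hφ.comp (monotone_mul_left_of_nonneg hv)).intervalIntegrable

theorem le_dilationAverage {v : ℝ} (hv : 0 ≤ v) : φ v ≤ dilationAverage φ v := by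
  have h := integral_mono_on (μ := MeasureTheory.volume) one_le_two intervalIntegrable_const
    (hφ.intervalIntegrable_comp_mul hv 1 2)
    fun s hs => hφ (le_mul_of_one_le_right hv hs.1)
  norm_num at h
  exact h

theorem dilationAverage_le {v : ℝ} (hv : 0 ≤ v) : dilationAverage φ v ≤ φ (2 * v) := by
  have h := integral_mono_on (μ := MeasureTheory.volume) (g := fun _ => φ (2 * v)) one_le_two
    (hφ.intervalIntegrable_comp_mul hv 1 2) intervalIntegrable_const
    fun s hs => hφ (by nlinarith [hs.2])
  norm_num at h
  exact h

theorem monotoneOn_dilationAverage : MonotoneOn (dilationAverage φ) (Ici 0) :=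
  fun _ hv _ _ hvw => integral_mono_on one_le_two (hφ.intervalIntegrable_comp_mul hv 1 2)
    (hφ.intervalIntegrable_comp_mul (le_trans hv hvw) 1 2)
    fun _ hs => hφ (mul_le_mul_of_nonneg_right hvw (zero_le_one.trans hs.1))

theorem continuousOn_dilationAverage : ContinuousOn (dilationAverage φ) (Ioi 0) := by
  have hint : ∀ a b : ℝ, IntervalIntegrable φ MeasureTheory.volume a b :=
    fun _ _ => hφ.intervalIntegrable
  have hP := continuous_primitive hint 0
  have heq : EqOn (fun v => v⁻¹ * ((∫ x in (0 : ℝ)..v * 2, φ x) - ∫ x in (0 : ℝ)..v * 1, φ x))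
      (dilationAverage φ) (Ioi 0) := fun v hv => by
    dsimp only
    rw [integral_interval_sub_left (hint _ _) (hint _ _), dilationAverage,
      integral_comp_mul_left φ (ne_of_gt hv), smul_eq_mul]
  refine ContinuousOn.congr ?_ heq.symm
  exact continuousOn_inv₀.mono (fun v hv => ne_of_gt hv) |>.mul
    ((hP.comp (continuous_mul_const 2)).sub (hP.comp (continuous_mul_const 1))).continuousOn

theorem exists_classKInf_ge (h0 : φ 0 = 0) (hc : ContinuousWithinAt φ (Ici 0) 0) :
    ∃ α : ℝ → ℝ, ClassKInf α ∧ ∀ v, 0 ≤ v → φ v ≤ α v := by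
  have havg_nonneg : ∀ v, 0 ≤ v → 0 ≤ dilationAverage φ v := fun v hv =>
    h0 ▸ (hφ hv).trans (hφ.le_dilationAverage hv)
  have havg0 : dilationAverage φ 0 = 0 := by simp [dilationAverage, h0]
  have hdouble : Tendsto (fun v => φ (2 * v)) (𝓝[Ici 0] 0) (𝓝 0) := by
    have h2 : Tendsto (fun v : ℝ => 2 * v) (𝓝[Ici 0] 0) (𝓝[Ici 0] 0) :=
      tendsto_nhdsWithin_of_tendsto_nhds_of_eventually_within _
        (by simpa using ((continuous_const_mul (2 : ℝ)).tendsto 0).mono_left nhdsWithin_le_nhds)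
        (eventually_nhdsWithin_of_forall fun v (hv : 0 ≤ v) => show 0 ≤ 2 * v by positivity)
    have h := hc.tendsto.comp h2
    rwa [h0] at h
  have hcont0 : ContinuousWithinAt (dilationAverage φ) (Ici 0) 0 := by
    rw [ContinuousWithinAt, havg0]
    exact tendsto_of_tendsto_of_tendsto_of_le_of_le' tendsto_const_nhds hdouble
      (eventually_nhdsWithin_of_forall havg_nonneg)
      (eventually_nhdsWithin_of_forall fun v hv => hφ.dilationAverage_le hv)
  refine ⟨fun v => v + dilationAverage φ v, ⟨⟨?_, ?_, by simp [havg0], ?_⟩, ?_⟩, ?_⟩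
  · intro v (hv : 0 ≤ v)
    rcases hv.eq_or_lt with rfl | hv
    · exact continuousWithinAt_id.add hcont0
    · exact (continuousAt_id.add
        (hφ.continuousOn_dilationAverage.continuousAt (Ioi_mem_nhds hv))).continuousWithinAt
  · exact (strictMono_id.strictMonoOn _).add_monotone hφ.monotoneOn_dilationAverage
  · exact fun v hv => add_nonneg hv (havg_nonneg v hv)
  · intro M
    refine ⟨max M 0 + 1, by positivity, ?_⟩
    linarith [le_max_left M 0, havg_nonneg (max M 0 + 1) (by positivity)]
  · intro v hv
    linarith [hφ.le_dilationAverage hv]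

end Monotone

theorem exists_classKInf_le_comp {X : Type*} {s : Set X} {f g : X → ℝ}
    (hf : ∀ x ∈ s, 0 ≤ f x) (hg : ∀ x ∈ s, 0 ≤ g x)
    (hbdd : ∀ v, BddAbove (f '' {x ∈ s | g x ≤ v}))
    (hsmall : ∀ ε > 0, ∃ δ > 0, ∀ x ∈ s, g x ≤ δ → f x ≤ ε) :
    ∃ α : ℝ → ℝ, ClassKInf α ∧ ∀ x ∈ s, f x ≤ α (g x) := by
  set φ : ℝ → ℝ := fun v => sSup (f '' {x ∈ s | g x ≤ v}) with hφ
  have hφ_nonneg : ∀ v, 0 ≤ φ v := fun v => Real.sSup_nonneg <| by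
    rintro _ ⟨x, hx, rfl⟩
    exact hf x hx.1
  have hφ_small : ∀ ε > 0, ∃ δ > 0, ∀ v ≤ δ, φ v ≤ ε := fun ε hε => by
    obtain ⟨δ, hδ, hfδ⟩ := hsmall ε hε
    refine ⟨δ, hδ, fun v hv => Real.sSup_le ?_ hε.le⟩
    rintro _ ⟨x, hx, rfl⟩
    exact hfδ x hx.1 (hx.2.trans hv)
  have hφ_mono : Monotone φ := fun v w hvw => by
    rcases (f '' {x ∈ s | g x ≤ v}).eq_empty_or_nonempty with h | h
    · simpa [hφ, h] using hφ_nonneg w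
    · exact csSup_le_csSup (hbdd w) h (image_mono fun x hx => ⟨hx.1, hx.2.trans hvw⟩)
  have hφ0 : φ 0 = 0 := le_antisymm (le_of_forall_pos_le_add fun ε hε => by
    obtain ⟨δ, hδ, h⟩ := hφ_small ε hε
    simpa using h 0 hδ.le) (hφ_nonneg 0)
  have hφc : ContinuousWithinAt φ (Ici 0) 0 := by
    rw [Metric.continuousWithinAt_iff]
    intro ε hε
    obtain ⟨δ, hδ, h⟩ := hφ_small (ε / 2) (half_pos hε)
    refine ⟨δ, hδ, fun v _ hv => ?_⟩
    rw [Real.dist_eq, hφ0, sub_zero, abs_of_nonneg (hφ_nonneg v)]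
    exact (h v (le_of_abs_le (by simpa [Real.dist_eq] using hv.le))).trans_lt (half_lt_self hε)
  obtain ⟨α, hα, hφα⟩ := hφ_mono.exists_classKInf_ge hφ0 hφc
  exact ⟨α, hα, fun x hx =>
    (le_csSup (hbdd (g x)) ⟨x, ⟨hx, le_rfl⟩, rfl⟩).trans (hφα (g x) (hg x hx))⟩

theorem exists_classKInf_natCast_ge {h : ℕ → ℝ} (hh : ∀ n, 0 ≤ h n) :
    ∃ α : ℝ → ℝ, ClassKInf α ∧ ∀ n : ℕ, 1 ≤ n → h n ≤ α n := by
  have hfin : ∀ v : ℝ, {n : ℕ | 1 ≤ n ∧ (n : ℝ) ≤ v}.Finite := fun v =>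
    (finite_Iic ⌊v⌋₊).subset fun n hn => Nat.le_floor hn.2
  obtain ⟨α, hα, hle⟩ := exists_classKInf_le_comp (s := {n : ℕ | 1 ≤ n}) (g := (↑))
    (fun n _ => hh n) (fun n _ => n.cast_nonneg) (fun v => ((hfin v).image h).bddAbove)
    fun ε _ => ⟨1 / 2, by norm_num, fun n (hn : 1 ≤ n) hn' => by
      have : (1 : ℝ) ≤ n := by exact_mod_cast hn
      linarith⟩
  exact ⟨α, hα, hle⟩

namespace ClassKL

variable {β : ℝ → ℝ → ℝ} (hβ : ClassKL β)
include hβ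

theorem nonneg {r t : ℝ} (hr : 0 ≤ r) (ht : 0 ≤ t) : 0 ≤ β r t :=
  (hβ.1 t ht).2.2.2 r hr

theorem mono_left {r r' t : ℝ} (hr : 0 ≤ r) (hrr' : r ≤ r') (ht : 0 ≤ t) : β r t ≤ β r' t :=
  (hβ.1 t ht).2.1.monotoneOn hr (hr.trans hrr') hrr'

theorem apply_zero_left {t : ℝ} (ht : 0 ≤ t) : β 0 t = 0 :=
  (hβ.1 t ht).2.2.1

theorem le_apply_zero {r t : ℝ} (hr : 0 ≤ r) (ht : 0 ≤ t) : β r t ≤ β r 0 := by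
  rcases hr.eq_or_lt with rfl | hr
  · rw [hβ.apply_zero_left ht, hβ.apply_zero_left le_rfl]
  · exact (hβ.2 r hr).2.1 self_mem_Ici ht ht

theorem exists_forall_ge_le {r ε : ℝ} (hr : 0 < r) (hε : 0 < ε) :
    ∃ T, ∀ t ≥ T, β r t ≤ ε :=
  eventually_atTop.1 <| (hβ.2 r hr).2.2.eventually (ge_mem_nhds hε)

theorem exists_pos_apply_zero_le {ε : ℝ} (hε : 0 < ε) : ∃ ρ > 0, β ρ 0 ≤ ε := by
  have hc : Tendsto (β · 0) (𝓝[>] 0) (𝓝 0) := by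
    have := ((hβ.1 0 le_rfl).1 0 self_mem_Ici).mono Ioi_subset_Ici_self
    rwa [ContinuousWithinAt, hβ.apply_zero_left le_rfl] at this
  exact ((hc.eventually (ge_mem_nhds hε)).and self_mem_nhdsWithin).exists.imp
    fun ρ h => ⟨h.2, h.1⟩

theorem exists_classKInf_settling :
    ∃ α₁ : ℝ → ℝ, ClassKInf α₁ ∧ ∀ r t, 1 ≤ r → 0 ≤ t →
      α₁ r * Real.exp (-t) ≤ Real.exp r → β r t ≤ 1 / r := by
  choose T hT using fun n : ℕ =>
    hβ.exists_forall_ge_le (r := n + 1) (ε := 1 / (n + 1)) (by positivity) (by positivity)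
  obtain ⟨α₁, hα₁, hα₁T⟩ :=
    exists_classKInf_natCast_ge (h := fun n => Real.exp (n + 1 + T n)) fun n => (Real.exp_pos _).le
  refine ⟨α₁, hα₁, fun r t hr ht hrt => ?_⟩
  set n := ⌊r⌋₊
  have hn : 1 ≤ n := Nat.le_floor (by exact_mod_cast hr)
  have hrn : r < n + 1 := Nat.lt_floor_add_one r
  have hα₁n : Real.exp (n + 1 + T n) ≤ α₁ r :=
    (hα₁T n hn).trans <| hα₁.1.2.1.monotoneOn (mem_Ici.2 n.cast_nonneg)
      (mem_Ici.2 (zero_le_one.trans hr)) (Nat.floor_le (zero_le_one.trans hr))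
  have hTt : T n ≤ t := by
    have h : Real.exp (n + 1 + T n) * Real.exp (-t) ≤ Real.exp (n + 1) :=
      (mul_le_mul_of_nonneg_right hα₁n (Real.exp_pos _).le).trans
        (hrt.trans (Real.exp_le_exp.2 hrn.le))
    rw [← Real.exp_add, Real.exp_le_exp] at h
    linarith
  calc β r t ≤ β (n + 1) t := hβ.mono_left (by positivity) hrn.le ht
    _ ≤ 1 / (n + 1) := hT n t hTt
    _ ≤ 1 / r := one_div_le_one_div_of_le (by positivity) hrn.le

section Settling

variable {α₁ : ℝ → ℝ}
  (hsettle : ∀ r t, 1 ≤ r → 0 ≤ t → α₁ r * Real.exp (-t) ≤ Real.exp r → β r t ≤ 1 / r)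
include hsettle

theorem bddAbove_image_sublevel (v : ℝ) :
    BddAbove ((fun p : ℝ × ℝ => β p.1 p.2) ''
      {p ∈ Ici 0 ×ˢ Ici 0 | α₁ p.1 * Real.exp (-p.2) ≤ v}) := by
  refine ⟨max (β (max 1 v) 0) 1, ?_⟩
  rintro _ ⟨⟨r, t⟩, ⟨⟨hr, ht⟩, hv⟩, rfl⟩
  rcases le_or_gt r (max 1 v) with hrv | hrv
  · exact le_max_of_le_left <|
      (hβ.le_apply_zero hr ht).trans (hβ.mono_left hr hrv le_rfl)
  · have hr1 : 1 ≤ r := (le_max_left 1 v).trans hrv.le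
    have hexp : α₁ r * Real.exp (-t) ≤ Real.exp r := calc
      _ ≤ v := hv
      _ ≤ Real.exp v := by linarith [Real.add_one_le_exp v]
      _ ≤ Real.exp r := Real.exp_le_exp.2 ((le_max_right 1 v).trans hrv.le)
    exact le_max_of_le_right <|
      (hsettle r t hr1 ht hexp).trans (by simpa using inv_le_one_of_one_le₀ hr1)

theorem exists_pos_le_on_sublevel (hα₁ : ClassK α₁) {ε : ℝ} (hε : 0 < ε) :
    ∃ δ > 0, ∀ p ∈ Ici (0 : ℝ) ×ˢ Ici 0, α₁ p.1 * Real.exp (-p.2) ≤ δ → β p.1 p.2 ≤ ε := by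
  obtain ⟨ρ, hρ, hβρ⟩ := hβ.exists_pos_apply_zero_le hε
  set R := max 1 (1 / ε)
  obtain ⟨T, hT⟩ := hβ.exists_forall_ge_le (r := R) (by positivity) hε
  have hα₁ρ : 0 < α₁ ρ := hα₁.2.2.1 ▸ hα₁.2.1 self_mem_Ici hρ.le hρ
  refine ⟨min 1 (α₁ ρ * Real.exp (-T)), by positivity, ?_⟩
  rintro ⟨r, t⟩ ⟨hr, ht⟩ hδ
  dsimp only at hr ht hδ ⊢
  rcases le_or_gt r ρ with hrρ | hρr
  · exact (hβ.le_apply_zero hr ht).trans ((hβ.mono_left hr hrρ le_rfl).trans hβρ)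
  rcases le_or_gt r R with hrR | hRr
  · have hTt : T ≤ t := by
      have h : α₁ ρ * Real.exp (-t) ≤ α₁ ρ * Real.exp (-T) :=
        (mul_le_mul_of_nonneg_right (hα₁.2.1.monotoneOn hρ.le hr hρr.le)
          (Real.exp_pos _).le).trans (hδ.trans (min_le_right _ _))
      have := Real.exp_le_exp.1 (le_of_mul_le_mul_left h hα₁ρ)
      linarith
    exact (hβ.mono_left hr hrR ht).trans (hT t hTt)
  · have hR1 : 1 ≤ r := (le_max_left _ _).trans hRr.le
    have hexp : α₁ r * Real.exp (-t) ≤ Real.exp r :=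
      (hδ.trans (min_le_left _ _)).trans (Real.one_le_exp hr)
    calc β r t ≤ 1 / r := hsettle r t hR1 ht hexp
      _ ≤ 1 / (1 / ε) :=
        one_div_le_one_div_of_le (by positivity) ((le_max_right _ _).trans hRr.le)
      _ = ε := one_div_one_div ε

end Settling

end ClassKL

/-- Sontag's `KL`-lemma. -/
theorem sontag_KL_lemma (β : ℝ → ℝ → ℝ) (hβ : ClassKL β) :
    ∃ α₁ α₂ : ℝ → ℝ, ClassKInf α₁ ∧ ClassKInf α₂ ∧
      ∀ r t : ℝ, 0 ≤ r → 0 ≤ t → β r t ≤ α₂ (α₁ r * Real.exp (-t)) := by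
  obtain ⟨α₁, hα₁, hsettle⟩ := hβ.exists_classKInf_settling
  obtain ⟨α₂, hα₂, hle⟩ := exists_classKInf_le_comp (s := Ici 0 ×ˢ Ici 0)
    (f := fun p : ℝ × ℝ => β p.1 p.2) (g := fun p => α₁ p.1 * Real.exp (-p.2))
    (fun p hp => hβ.nonneg hp.1 hp.2)
    (fun p hp => mul_nonneg (hα₁.1.2.2.2 p.1 hp.1) (Real.exp_pos _).le)
    (hβ.bddAbove_image_sublevel hsettle)
    fun ε hε => hβ.exists_pos_le_on_sublevel hsettle hα₁.1 hε
  exact ⟨α₁, α₂, hα₁, hα₂, fun r t hr ht => hle (r, t) ⟨hr, ht⟩⟩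
end

section
/- Let Σ = (X, 𝒟, φ) be a forward complete abstract dynamical system on a normed linear space X with disturbance set 𝒟. Then Σ is robustly forward complete if and only if there exists a continuous increasing function μ : [0,∞)² → [0,∞) such that ‖φ(t,x,d)‖ ≤ μ(‖x‖, t) for all x ∈ X, d ∈ 𝒟, t ≥ 0. -/
open Filter Set

/-- An abstract forward-complete dynamical system with disturbances. -/
structure DynSys (X : Type*) [NormedAddCommGroup X] (D : Type*) where
  /-- time shift on disturbances -/
  shift : ℝ → D → D
  /-- transition map -/
  phi : ℝ → X → D → X
  identity : ∀ x d, phi 0 x d = x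
  cont : ∀ x d, ContinuousOn (fun t => phi t x d) (Ici 0)
  cocycle : ∀ t h x d, 0 ≤ t → 0 ≤ h →
    phi h (phi t x d) (shift t d) = phi (t + h) x d

/-- Robust forward completeness. -/
def DynSys.RFC {X D : Type*} [NormedAddCommGroup X] (S : DynSys X D) : Prop :=
  ∀ C > (0:ℝ), ∀ τ > (0:ℝ), ∃ B : ℝ, ∀ (x : X) (d : D) (t : ℝ),
    ‖x‖ ≤ C → 0 ≤ t → t ≤ τ → ‖S.phi t x d‖ ≤ B

/-- `0` is an equilibrium point. -/
def DynSys.Equilibrium {X D : Type*} [NormedAddCommGroup X] (S : DynSys X D) : Prop :=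
  ∀ (t : ℝ) (d : D), 0 ≤ t → S.phi t 0 d = 0

/-- `0` is a robust equilibrium point. -/
def DynSys.REP {X D : Type*} [NormedAddCommGroup X] (S : DynSys X D) : Prop :=
  S.Equilibrium ∧ ∀ ε > (0:ℝ), ∀ h > (0:ℝ), ∃ δ > (0:ℝ), ∀ (t : ℝ) (x : X) (d : D),
    0 ≤ t → t ≤ h → ‖x‖ ≤ δ → ‖S.phi t x d‖ ≤ ε


/-- Piecewise-linear interpolation of a sequence at integer points. -/
noncomputable def interpSeq (c : ℕ → ℝ) (s : ℝ) : ℝ :=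
  c ⌊s⌋₊ + (s - ⌊s⌋₊) * (c (⌊s⌋₊ + 1) - c ⌊s⌋₊)

lemma interpSeq_eq (c : ℕ → ℝ) (n : ℕ) {s : ℝ} (h1 : (n:ℝ) ≤ s) (h2 : s ≤ (n:ℝ)+1) :
    interpSeq c s = c n + (s - n) * (c (n+1) - c n) := by
  rcases lt_or_eq_of_le h2 with h2 | h2
  · have hf : ⌊s⌋₊ = n := by
      rw [Nat.floor_eq_iff (le_trans (Nat.cast_nonneg n) h1)]
      exact ⟨h1, h2⟩
    simp [interpSeq, hf]
  · have hs : s = ((n+1 : ℕ) : ℝ) := by push_cast; exact h2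
    have hf : ⌊s⌋₊ = n + 1 := by rw [hs, Nat.floor_natCast]
    rw [interpSeq, hf, hs]
    push_cast
    ring

lemma interpSeq_eq_zero (c : ℕ → ℝ) {s : ℝ} (h : s ≤ 1) :
    interpSeq c s = c 0 + s * (c 1 - c 0) := by
  rcases lt_or_eq_of_le h with h | h
  · have hf : ⌊s⌋₊ = 0 := Nat.floor_eq_zero.mpr h
    simp [interpSeq, hf]
  · have hf : ⌊s⌋₊ = 1 := by rw [h]; simp
    rw [interpSeq, hf, h]; norm_num

lemma interpSeq_continuous (c : ℕ → ℝ) : Continuous (interpSeq c) := by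
  rw [continuous_iff_continuousAt]
  intro s₀
  by_cases h1 : s₀ < 1
  · apply ContinuousAt.congr (f := fun s => c 0 + s * (c 1 - c 0))
    · fun_prop
    · filter_upwards [Iio_mem_nhds h1] with s hs
      exact (interpSeq_eq_zero c hs.le).symm
  · push_neg at h1
    have hs0 : (0:ℝ) ≤ s₀ := le_trans zero_le_one h1
    obtain ⟨m, hm⟩ : ∃ m, ⌊s₀⌋₊ = m + 1 :=
      ⟨⌊s₀⌋₊ - 1, (Nat.succ_pred_eq_of_pos (Nat.le_floor (by exact_mod_cast h1))).symm⟩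
    have hfl : ((m:ℝ) + 1) ≤ s₀ := by
      have := Nat.floor_le hs0
      rw [hm] at this; push_cast at this; linarith
    have hfu : s₀ < (m:ℝ) + 2 := by
      have := Nat.lt_floor_add_one s₀
      rw [hm] at this; push_cast at this; linarith
    have hA : ContinuousWithinAt (interpSeq c) (Icc (m:ℝ) ((m:ℝ)+1)) s₀ := by
      by_cases hmem : s₀ ∈ Icc (m:ℝ) ((m:ℝ)+1)
      · refine (ContinuousOn.congr (f := fun s => c m + (s - m) * (c (m+1) - c m))
          (by fun_prop) ?_).continuousWithinAt hmem
        intro s hs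
        exact interpSeq_eq c m hs.1 hs.2
      · exact continuousWithinAt_of_notMem_closure (by rwa [isClosed_Icc.closure_eq])
    have hB : ContinuousWithinAt (interpSeq c) (Icc ((m:ℝ)+1) ((m:ℝ)+2)) s₀ := by
      refine (ContinuousOn.congr (f := fun s => c (m+1) + (s - (m+1)) * (c (m+2) - c (m+1)))
        (by fun_prop) ?_).continuousWithinAt ⟨hfl, hfu.le⟩
      intro s hs
      have := interpSeq_eq c (m+1) (by push_cast; exact_mod_cast hs.1) (by push_cast;  linarith [hs.2])
      rw [this]; push_cast; ring
    have hu : ContinuousWithinAt (interpSeq c)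
        (Icc (m:ℝ) ((m:ℝ)+1) ∪ Icc ((m:ℝ)+1) ((m:ℝ)+2)) s₀ := hA.union hB
    rw [Icc_union_Icc_eq_Icc (by linarith) (by linarith)] at hu
    exact hu.continuousAt (Icc_mem_nhds (by linarith) hfu)

lemma interpSeq_lower (c : ℕ → ℝ) (hc : Monotone c) {s : ℝ} (hs : 0 ≤ s) :
    c ⌊s⌋₊ ≤ interpSeq c s := by
  have h1 : (⌊s⌋₊ : ℝ) ≤ s := Nat.floor_le hs
  have h2 : c ⌊s⌋₊ ≤ c (⌊s⌋₊ + 1) := hc (Nat.le_succ _)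
  unfold interpSeq
  nlinarith

lemma interpSeq_upper (c : ℕ → ℝ) (hc : Monotone c) {s : ℝ} (hs : 0 ≤ s) :
    interpSeq c s ≤ c (⌊s⌋₊ + 1) := by
  have h1 : s < (⌊s⌋₊ : ℝ) + 1 := Nat.lt_floor_add_one s
  have h3 : (⌊s⌋₊ : ℝ) ≤ s := Nat.floor_le hs
  have h2 : c ⌊s⌋₊ ≤ c (⌊s⌋₊ + 1) := hc (Nat.le_succ _)
  unfold interpSeq
  nlinarith

lemma interpSeq_mono (c : ℕ → ℝ) (hc : Monotone c) : MonotoneOn (interpSeq c) (Ici 0) := by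
  intro a ha b hb hab
  have hfl : ⌊a⌋₊ ≤ ⌊b⌋₊ := Nat.floor_mono hab
  rcases eq_or_lt_of_le hfl with heq | hlt
  · have hΔ : c (⌊a⌋₊ + 1) - c ⌊a⌋₊ ≥ 0 := by
      have := hc (Nat.le_succ ⌊a⌋₊); linarith
    unfold interpSeq
    rw [← heq]
    nlinarith
  · calc interpSeq c a ≤ c (⌊a⌋₊ + 1) := interpSeq_upper c hc ha
      _ ≤ c ⌊b⌋₊ := hc hlt
      _ ≤ interpSeq c b := interpSeq_lower c hc hb

/-- Running monotone nonnegative envelope of a sequence. -/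
noncomputable def monoOf (B : ℕ → ℝ) : ℕ → ℝ
  | 0 => max 0 (B 0)
  | n+1 => max (monoOf B n) (max 0 (B (n+1)))

lemma monoOf_nonneg (B : ℕ → ℝ) : ∀ n, 0 ≤ monoOf B n
  | 0 => le_max_left _ _
  | n+1 => le_trans (monoOf_nonneg B n) (le_max_left _ _)

lemma le_monoOf (B : ℕ → ℝ) : ∀ n, B n ≤ monoOf B n
  | 0 => le_max_right _ _
  | _+1 => le_trans (le_max_right _ _) (le_max_right _ _)

lemma monoOf_mono (B : ℕ → ℝ) : Monotone (monoOf B) :=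
  monotone_nat_of_le_succ fun _ => le_max_left _ _

/-- RFC is equivalent to the existence of a continuous increasing bound `μ`. -/
theorem rfc_iff_exists_mu {X D : Type*} [NormedAddCommGroup X] (S : DynSys X D) :
    S.RFC ↔ ∃ μ : ℝ → ℝ → ℝ,
      ContinuousOn (fun p : ℝ × ℝ => μ p.1 p.2) (Ici 0 ×ˢ Ici 0) ∧
      (∀ r₁ r₂ t₁ t₂ : ℝ, 0 ≤ r₁ → 0 ≤ t₁ → r₁ ≤ r₂ → t₁ ≤ t₂ → μ r₁ t₁ ≤ μ r₂ t₂) ∧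
      (∀ r t : ℝ, 0 ≤ r → 0 ≤ t → 0 ≤ μ r t) ∧
      ∀ (x : X) (d : D) (t : ℝ), 0 ≤ t → ‖S.phi t x d‖ ≤ μ ‖x‖ t := by
  constructor
  · intro hrfc
    choose B hB using fun n : ℕ => hrfc ((n:ℝ)+1) (by positivity) ((n:ℝ)+1) (by positivity)
    set c := monoOf B with hc
    have hcm : Monotone c := monoOf_mono B
    refine ⟨fun r t => interpSeq c (max r t), ?_, ?_, ?_, ?_⟩
    · exact ((interpSeq_continuous c).comp (continuous_fst.max continuous_snd)).continuousOn
    · intro r₁ r₂ t₁ t₂ hr ht hr2 ht2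
      exact interpSeq_mono c hcm (le_trans hr (le_max_left _ _))
        (le_trans (le_trans hr hr2) (le_max_left _ _)) (max_le_max hr2 ht2)
    · intro r t hr _
      exact le_trans (monoOf_nonneg B _)
        (interpSeq_lower c hcm (le_trans hr (le_max_left _ _)))
    · intro x d t ht
      set s := max ‖x‖ t with hsdef
      have hs : (0:ℝ) ≤ s := le_trans (norm_nonneg x) (le_max_left _ _)
      have hlt : s < (⌊s⌋₊ : ℝ) + 1 := Nat.lt_floor_add_one s
      have h1 : ‖x‖ ≤ (⌊s⌋₊ : ℝ) + 1 := le_trans (le_max_left _ _) hlt.le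
      have h2 : t ≤ (⌊s⌋₊ : ℝ) + 1 := le_trans (le_max_right _ _) hlt.le
      calc ‖S.phi t x d‖ ≤ B ⌊s⌋₊ := hB ⌊s⌋₊ x d t h1 ht h2
        _ ≤ c ⌊s⌋₊ := le_monoOf B _
        _ ≤ interpSeq c s := interpSeq_lower c hcm hs
  · rintro ⟨μ, -, hmono, -, hbound⟩ C hC τ hτ
    exact ⟨μ C τ, fun x d t hx ht htτ =>
      (hbound x d t ht).trans (hmono ‖x‖ C t τ (norm_nonneg x) ht hx htτ)⟩
end

section
/- Let Σ = (X, 𝒟, φ) be a forward complete abstract dynamical system. Then Σ is robustly forward complete and 0 is a robust equilibrium point of Σ if and only if there exist a class-K∞ function σ and a continuous function χ : [0,∞)² → [0,∞) with χ(r,·) of class K for each r > 0 and χ(0,t) = 0 for all t ≥ 0, such that ‖φ(t,x,d)‖ ≤ σ(‖x‖) + χ(‖x‖, t) for all x ∈ X, d ∈ 𝒟, t ≥ 0. -/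
open Filter Set

/-!
For the forward direction let `F_m(r)` be the supremum of `‖φ(t,x,d)‖` over `‖x‖ ≤ r` and
`0 ≤ t ≤ m + 1`: RFC makes it finite and REP makes it tend to `0` as `r → 0⁺`. A monotone
function with this property is dominated by the class-`K∞` function `r ↦ (1/r) ∫_r^{2r} F_m + r`;
call it `G_m`. Then `σ = G_0` and `χ(r,t) = r t + ∑_k G_{k+1}(r) · clamp₀₁(t - k)` work: the
term `r t` makes `χ(r, ·)` strictly increasing, and the sum has climbed past `G_m(r)` by time
`m`. Conversely, continuity of `χ` on compact sets gives RFC, and continuity of `σ` and `χ` at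
`r = 0`, where both vanish, gives REP.
-/

open Topology

noncomputable def dyadicAverage (f : ℝ → ℝ) (r : ℝ) : ℝ := (∫ s in r..2 * r, f s) / r

section dyadicAverage

variable {f : ℝ → ℝ}

-- Division by zero gives `0` here, which is exactly the value a class-`K` function needs at `0`.
@[simp]
theorem dyadicAverage_zero : dyadicAverage f 0 = 0 := by
  simp [dyadicAverage]

theorem Monotone.nonneg_of_tendsto_nhdsGT_zero (hf : Monotone f)
    (h0 : Tendsto f (𝓝[>] 0) (𝓝 0)) {r : ℝ} (hr : 0 < r) : 0 ≤ f r :=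
  _root_.le_of_tendsto h0 (eventually_of_mem (Ioo_mem_nhdsGT hr) fun _ hs => hf hs.2.le)

theorem Monotone.nonpos_of_tendsto_nhdsGT_zero (hf : Monotone f)
    (h0 : Tendsto f (𝓝[>] 0) (𝓝 0)) : f 0 ≤ 0 :=
  _root_.ge_of_tendsto h0 (eventually_of_mem self_mem_nhdsWithin fun _ hs => hf hs.le)

theorem Monotone.le_dyadicAverage (hf : Monotone f) {r : ℝ} (hr : 0 < r) :
    f r ≤ dyadicAverage f r := by
  rw [dyadicAverage, le_div_iff₀ hr]
  calc f r * r = ∫ _ in r..2 * r, f r := by simp; ring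
    _ ≤ ∫ s in r..2 * r, f s :=
      intervalIntegral.integral_mono_on (by linarith) intervalIntegrable_const
        hf.intervalIntegrable fun s hs => hf hs.1

theorem Monotone.dyadicAverage_le (hf : Monotone f) {r : ℝ} (hr : 0 < r) :
    dyadicAverage f r ≤ f (2 * r) := by
  rw [dyadicAverage, div_le_iff₀ hr]
  calc ∫ s in r..2 * r, f s ≤ ∫ _ in r..2 * r, f (2 * r) :=
      intervalIntegral.integral_mono_on (by linarith) hf.intervalIntegrable
        intervalIntegrable_const fun s hs => hf hs.2
    _ = f (2 * r) * r := by simp; ring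

theorem dyadicAverage_eq_integral_comp_mul {r : ℝ} (hr : r ≠ 0) :
    dyadicAverage f r = ∫ u in (1 : ℝ)..2, f (r * u) := by
  rw [intervalIntegral.integral_comp_mul_left f hr, dyadicAverage, mul_one, mul_comm r 2,
    smul_eq_mul, inv_mul_eq_div]

theorem Monotone.monotoneOn_dyadicAverage (hf : Monotone f) (h0 : Tendsto f (𝓝[>] 0) (𝓝 0)) :
    MonotoneOn (dyadicAverage f) (Ici 0) := by
  intro r hr r' hr' hrr'
  rcases (mem_Ici.mp hr).eq_or_lt with rfl | hr_pos
  · rcases (mem_Ici.mp hr').eq_or_lt with rfl | hr'_pos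
    · rfl
    · simpa using
        (hf.nonneg_of_tendsto_nhdsGT_zero h0 hr'_pos).trans (hf.le_dyadicAverage hr'_pos)
  · rw [dyadicAverage_eq_integral_comp_mul hr_pos.ne',
      dyadicAverage_eq_integral_comp_mul (hr_pos.trans_le hrr').ne']
    refine intervalIntegral.integral_mono_on (by norm_num)
      (hf.comp (monotone_mul_left_of_nonneg hr)).intervalIntegrable
      (hf.comp (monotone_mul_left_of_nonneg hr')).intervalIntegrable fun u hu => ?_
    exact hf (mul_le_mul_of_nonneg_right hrr' (by linarith [hu.1]))

theorem Monotone.continuousOn_dyadicAverage (hf : Monotone f) :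
    ContinuousOn (dyadicAverage f) (Ioi 0) := by
  have hP := intervalIntegral.continuous_primitive (μ := MeasureTheory.volume)
    (fun _ _ => hf.intervalIntegrable) 0
  have hdiff : dyadicAverage f = fun r => ((∫ s in 0..2 * r, f s) - ∫ s in 0..r, f s) / r := by
    ext r
    rw [dyadicAverage, intervalIntegral.integral_interval_sub_left hf.intervalIntegrable
      hf.intervalIntegrable]
  rw [hdiff]
  exact ((hP.comp (continuous_const_mul 2)).sub hP).continuousOn.div continuousOn_id
    fun r hr => (mem_Ioi.mp hr).ne'

theorem Monotone.tendsto_dyadicAverage (hf : Monotone f) (h0 : Tendsto f (𝓝[>] 0) (𝓝 0)) :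
    Tendsto (dyadicAverage f) (𝓝[>] 0) (𝓝 0) := by
  have h2 : Tendsto (fun r => f (2 * r)) (𝓝[>] 0) (𝓝 0) :=
    h0.comp (by simpa only [comap_mulLeft_nhdsGT_zero (two_pos : (0 : ℝ) < 2)] using
      tendsto_comap (f := ((2 : ℝ) * ·)) (x := 𝓝[>] 0))
  exact tendsto_of_tendsto_of_tendsto_of_le_of_le' h0 h2
    (eventually_of_mem self_mem_nhdsWithin fun _ hr => hf.le_dyadicAverage hr)
    (eventually_of_mem self_mem_nhdsWithin fun _ hr => hf.dyadicAverage_le hr)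

theorem Monotone.exists_classKInf_ge_s7 (hf : Monotone f) (h0 : Tendsto f (𝓝[>] 0) (𝓝 0)) :
    ∃ g, ClassKInf g ∧ ∀ r, 0 ≤ r → f r ≤ g r := by
  have hmono := hf.monotoneOn_dyadicAverage h0
  have havg_nonneg : ∀ r, 0 ≤ r → 0 ≤ dyadicAverage f r := fun r hr => by
    simpa using hmono (mem_Ici.mpr le_rfl) hr hr
  have hcont : ContinuousOn (fun r => dyadicAverage f r + r) (Ici 0) := by
    intro r hr
    rcases (mem_Ici.mp hr).eq_or_lt with rfl | hr_pos
    · refine continuousWithinAt_Ioi_iff_Ici.mp ?_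
      simpa [ContinuousWithinAt] using
        (hf.tendsto_dyadicAverage h0).add (tendsto_id.mono_left nhdsWithin_le_nhds)
    · exact ((hf.continuousOn_dyadicAverage.add continuousOn_id).continuousAt
        (Ioi_mem_nhds hr_pos)).continuousWithinAt
  refine ⟨fun r => dyadicAverage f r + r,
    ⟨⟨hcont, hmono.add_strictMono strictMonoOn_id, by simp,
      fun r hr => add_nonneg (havg_nonneg r hr) hr⟩,
      fun M => ⟨max M 0 + 1, by positivity, ?_⟩⟩, fun r hr => ?_⟩
  · linarith [havg_nonneg (max M 0 + 1) (by positivity), le_max_left M 0]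
  · rcases hr.eq_or_lt with rfl | hr_pos
    · simpa using hf.nonpos_of_tendsto_nhdsGT_zero h0
    · linarith [hf.le_dyadicAverage hr_pos]

end dyadicAverage

noncomputable def rampSum (G : ℕ → ℝ → ℝ) (r t : ℝ) : ℝ :=
  ∑ᶠ k : ℕ, G (k + 1) r * projIcc (0 : ℝ) 1 zero_le_one (t - k)

section rampSum

variable {G : ℕ → ℝ → ℝ}

theorem rampSum_eq_sum_range {r t : ℝ} {N : ℕ} (hN : t ≤ N) :
    rampSum G r t =
      ∑ k ∈ Finset.range N, G (k + 1) r * projIcc (0 : ℝ) 1 zero_le_one (t - k) := by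
  refine finsum_eq_sum_of_support_subset _ fun k hk => ?_
  by_contra hkN
  have htk : t - k ≤ 0 := by
    have : (N : ℝ) ≤ k := by exact_mod_cast not_lt.mp (by simpa using hkN)
    linarith
  exact hk (by simp [projIcc_of_le_left _ htk])

theorem rampSum_zero_right (r : ℝ) : rampSum G r 0 = 0 := by
  rw [rampSum_eq_sum_range (N := 0) (by simp), Finset.sum_range_zero]

theorem rampSum_zero_left (hG : ∀ k, G k 0 = 0) (t : ℝ) : rampSum G 0 t = 0 := by
  simp [rampSum, hG]

theorem rampSum_nonneg (hG : ∀ k r, 0 ≤ r → 0 ≤ G k r) {r : ℝ} (hr : 0 ≤ r) (t : ℝ) :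
    0 ≤ rampSum G r t :=
  finsum_nonneg fun _ => mul_nonneg (hG _ r hr) (projIcc 0 1 zero_le_one _).2.1

theorem monotone_rampSum (hG : ∀ k r, 0 ≤ r → 0 ≤ G k r) {r : ℝ} (hr : 0 ≤ r) :
    Monotone (rampSum G r) := by
  intro t t' htt'
  rw [rampSum_eq_sum_range (htt'.trans (Nat.le_ceil t')), rampSum_eq_sum_range (Nat.le_ceil t')]
  exact Finset.sum_le_sum fun k _ => mul_le_mul_of_nonneg_left
    (monotone_projIcc zero_le_one (by linarith : t - k ≤ t' - k)) (hG _ r hr)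

theorem le_rampSum (hG : ∀ k r, 0 ≤ r → 0 ≤ G k r) {r t : ℝ} (hr : 0 ≤ r) {k : ℕ}
    (hkt : (k : ℝ) + 1 ≤ t) : G (k + 1) r ≤ rampSum G r t := by
  have hk : k ∈ Finset.range ⌈t⌉₊ := Finset.mem_range.mpr (Nat.lt_ceil.mpr (by linarith))
  rw [rampSum_eq_sum_range (Nat.le_ceil t)]
  calc G (k + 1) r = G (k + 1) r * projIcc (0 : ℝ) 1 zero_le_one (t - k) := by
        rw [projIcc_of_right_le _ (by linarith), mul_one]
    _ ≤ _ := Finset.single_le_sum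
          (f := fun i : ℕ => G (i + 1) r * projIcc (0 : ℝ) 1 zero_le_one (t - i))
          (fun i _ => mul_nonneg (hG _ r hr) (projIcc 0 1 _ _).2.1) hk

theorem continuousOn_rampSum (hG : ∀ k, ContinuousOn (G k) (Ici 0)) :
    ContinuousOn (fun p : ℝ × ℝ => rampSum G p.1 p.2) (Ici 0 ×ˢ univ) := by
  intro p hp
  set N := ⌈p.2⌉₊ + 1
  have hsum : ContinuousOn (fun q : ℝ × ℝ => ∑ k ∈ Finset.range N,
      G (k + 1) q.1 * projIcc (0 : ℝ) 1 zero_le_one (q.2 - k)) (Ici 0 ×ˢ univ) :=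
    continuousOn_finsetSum _ fun k _ =>
      ((hG (k + 1)).comp continuousOn_fst fun q hq => hq.1).mul
        (continuous_subtype_val.comp (continuous_projIcc.comp
          (continuous_snd.sub continuous_const))).continuousOn
  have hpN : p.2 < N := (Nat.le_ceil p.2).trans_lt (by simp [N])
  refine (hsum p hp).congr_of_eventuallyEq ?_ (rampSum_eq_sum_range hpN.le)
  filter_upwards [mem_nhdsWithin_of_mem_nhds
    ((isOpen_Iio.preimage continuous_snd).mem_nhds hpN)] with q hq
  exact rampSum_eq_sum_range (le_of_lt hq)

end rampSum

theorem exists_chi_dominating_seq (G : ℕ → ℝ → ℝ) (hGc : ∀ k, ContinuousOn (G k) (Ici 0))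
    (hG0 : ∀ k, G k 0 = 0) (hGnn : ∀ k r, 0 ≤ r → 0 ≤ G k r) :
    ∃ χ : ℝ → ℝ → ℝ,
      ContinuousOn (fun p : ℝ × ℝ => χ p.1 p.2) (Ici 0 ×ˢ Ici 0) ∧
      (∀ r t : ℝ, 0 ≤ r → 0 ≤ t → 0 ≤ χ r t) ∧
      (∀ r : ℝ, 0 < r → ClassK (χ r)) ∧
      (∀ t : ℝ, 0 ≤ t → χ 0 t = 0) ∧
      ∀ (k : ℕ) (r t : ℝ), 0 ≤ r → (k : ℝ) ≤ t → G k r ≤ G 0 r + χ r t := by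
  have hχc : ContinuousOn (fun p : ℝ × ℝ => p.1 * p.2 + rampSum G p.1 p.2) (Ici 0 ×ˢ Ici 0) :=
    (continuous_fst.mul continuous_snd).continuousOn.add
      ((continuousOn_rampSum hGc).mono (prod_mono subset_rfl (subset_univ _)))
  have hχnn : ∀ r t : ℝ, 0 ≤ r → 0 ≤ t → 0 ≤ r * t + rampSum G r t := fun r t hr ht =>
    add_nonneg (mul_nonneg hr ht) (rampSum_nonneg hGnn hr t)
  refine ⟨fun r t => r * t + rampSum G r t, hχc, hχnn, fun r hr => ⟨?_, ?_, ?_, ?_⟩,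
    fun t _ => by simp [rampSum_zero_left hG0], fun k r t hr hkt => ?_⟩
  · exact hχc.comp (continuous_const.prodMk continuous_id).continuousOn fun t ht => ⟨hr.le, ht⟩
  · exact ((strictMono_mul_left_of_pos hr).add_monotone
      (monotone_rampSum hGnn hr.le)).strictMonoOn _
  · simp [rampSum_zero_right]
  · exact fun t ht => hχnn r t hr.le ht
  · have ht : 0 ≤ t := (Nat.cast_nonneg k).trans hkt
    cases k with
    | zero => linarith [hχnn r t hr ht]
    | succ k =>
      have := le_rampSum hGnn hr (k := k) (by simpa using hkt)
      linarith [hGnn 0 r hr, mul_nonneg hr ht]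

namespace DynSys

variable {X D : Type*} [NormedAddCommGroup X] (S : DynSys X D)

def reachNorms (τ r : ℝ) : Set ℝ :=
  {y | ∃ (x : X) (d : D) (t : ℝ), ‖x‖ ≤ r ∧ t ∈ Icc 0 τ ∧ ‖S.phi t x d‖ = y}

-- Adjoining `0` keeps the supremum over a nonempty set, also when `D` is empty.
noncomputable def normSup (τ r : ℝ) : ℝ := sSup (insert 0 (S.reachNorms τ r))

variable {S}

theorem normSup_nonneg (τ r : ℝ) : 0 ≤ S.normSup τ r := by
  refine Real.sSup_nonneg fun y hy => ?_
  rcases hy with rfl | ⟨x, d, t, -, -, rfl⟩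
  exacts [le_rfl, norm_nonneg _]

theorem RFC.bddAbove_reachNorms (hS : S.RFC) (τ r : ℝ) : BddAbove (S.reachNorms τ r) := by
  obtain ⟨B, hB⟩ := hS (max r 1) (by positivity) (max τ 1) (by positivity)
  exact ⟨B, fun y ⟨x, d, t, hx, ht, hy⟩ =>
    hy ▸ hB x d t (hx.trans (le_max_left r 1)) ht.1 (ht.2.trans (le_max_left τ 1))⟩

theorem RFC.norm_phi_le_normSup (hS : S.RFC) {τ t : ℝ} (ht : t ∈ Icc 0 τ) (x : X) (d : D) :
    ‖S.phi t x d‖ ≤ S.normSup τ ‖x‖ :=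
  le_csSup ((hS.bddAbove_reachNorms τ ‖x‖).insert 0)
    (mem_insert_of_mem _ ⟨x, d, t, le_rfl, ht, rfl⟩)

theorem RFC.monotone_normSup (hS : S.RFC) (τ : ℝ) : Monotone (S.normSup τ) := fun _ r' hrr' =>
  csSup_le_csSup ((hS.bddAbove_reachNorms τ r').insert 0) (insert_nonempty _ _)
    (insert_subset_insert fun _ ⟨x, d, t, hx, ht, hy⟩ => ⟨x, d, t, hx.trans hrr', ht, hy⟩)

theorem REP.tendsto_normSup (hS : S.REP) {τ : ℝ} (hτ : 0 < τ) :
    Tendsto (S.normSup τ) (𝓝[>] 0) (𝓝 0) := by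
  refine tendsto_order.2 ⟨fun a ha => Eventually.of_forall fun _ => ha.trans_le
    (normSup_nonneg τ _), fun ε hε => ?_⟩
  obtain ⟨δ, hδ, hsmall⟩ := hS.2 (ε / 2) (by positivity) τ hτ
  filter_upwards [Ioo_mem_nhdsGT hδ] with r hr
  refine (csSup_le (insert_nonempty _ _) ?_).trans_lt (half_lt_self hε)
  rintro y (rfl | ⟨x, d, t, hx, ht, rfl⟩)
  exacts [by positivity, hsmall t x d ht.1 ht.2 (hx.trans hr.2.le)]

theorem rfc_of_bound {σ : ℝ → ℝ} {χ : ℝ → ℝ → ℝ} (hσ : MonotoneOn σ (Ici 0))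
    (hχ : ContinuousOn (fun p : ℝ × ℝ => χ p.1 p.2) (Ici 0 ×ˢ Ici 0))
    (hbound : ∀ (x : X) (d : D) (t : ℝ), 0 ≤ t → ‖S.phi t x d‖ ≤ σ ‖x‖ + χ ‖x‖ t) :
    S.RFC := by
  intro C hC τ _
  obtain ⟨B, hB⟩ := ((isCompact_Icc (a := (0 : ℝ)) (b := C)).prod
    (isCompact_Icc (a := (0 : ℝ)) (b := τ))).bddAbove_image
    (hχ.mono (prod_mono Icc_subset_Ici_self Icc_subset_Ici_self))
  refine ⟨σ C + B, fun x d t hx ht htτ => (hbound x d t ht).trans (add_le_add ?_ ?_)⟩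
  · exact hσ (norm_nonneg x) hC.le hx
  · exact hB (mem_image_of_mem (fun p : ℝ × ℝ => χ p.1 p.2)
      (show (‖x‖, t) ∈ Icc 0 C ×ˢ Icc 0 τ from ⟨⟨norm_nonneg x, hx⟩, ht, htτ⟩))

theorem rep_of_bound {σ : ℝ → ℝ} {χ : ℝ → ℝ → ℝ} (hσ0 : σ 0 = 0)
    (hσ : ContinuousWithinAt σ (Ici 0) 0)
    (hχ : ContinuousOn (fun p : ℝ × ℝ => χ p.1 p.2) (Ici 0 ×ˢ Ici 0))
    (hχmono : ∀ r, 0 < r → MonotoneOn (χ r) (Ici 0)) (hχ0 : ∀ t, 0 ≤ t → χ 0 t = 0)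
    (hbound : ∀ (x : X) (d : D) (t : ℝ), 0 ≤ t → ‖S.phi t x d‖ ≤ σ ‖x‖ + χ ‖x‖ t) :
    S.REP := by
  refine ⟨fun t d ht => norm_le_zero_iff.mp ?_, fun ε hε h hh => ?_⟩
  · simpa [hσ0, hχ0 t ht] using hbound 0 d t ht
  have hχh : ContinuousOn (fun r => χ r h) (Ici 0) :=
    hχ.comp (continuous_id.prodMk continuous_const).continuousOn fun _ hr => ⟨hr, hh.le⟩
  have hcont : ContinuousWithinAt (fun r => σ r + χ r h) (Ici 0) 0 :=
    hσ.add (hχh 0 self_mem_Ici)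
  obtain ⟨δ, hδ, hsmall⟩ := mem_nhdsGE_iff_exists_Ico_subset.mp
    (hcont.eventually_lt_const (by simpa [hσ0, hχ0 h hh.le] using hε))
  refine ⟨δ / 2, half_pos hδ, fun t x d ht hth hx => ?_⟩
  have hσχ : σ ‖x‖ + χ ‖x‖ h < ε := hsmall ⟨norm_nonneg x, hx.trans_lt (half_lt_self hδ)⟩
  have hχt : χ ‖x‖ t ≤ χ ‖x‖ h := by
    rcases (norm_nonneg x).eq_or_lt with hx0 | hx0
    · rw [← hx0, hχ0 t ht, hχ0 h hh.le]
    · exact hχmono _ hx0 ht (ht.trans hth) hth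
  linarith [hbound x d t ht]

end DynSys

/-- RFC together with REP is equivalent to the estimate
`‖φ(t,x,d)‖ ≤ σ(‖x‖) + χ(‖x‖,t)`. -/
theorem rfc_and_rep_iff_sigma_chi {X D : Type*} [NormedAddCommGroup X] (S : DynSys X D) :
    (S.RFC ∧ S.REP) ↔ ∃ (σ : ℝ → ℝ) (χ : ℝ → ℝ → ℝ),
      ClassKInf σ ∧
      ContinuousOn (fun p : ℝ × ℝ => χ p.1 p.2) (Ici 0 ×ˢ Ici 0) ∧
      (∀ r t : ℝ, 0 ≤ r → 0 ≤ t → 0 ≤ χ r t) ∧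
      (∀ r : ℝ, 0 < r → ClassK (χ r)) ∧
      (∀ t : ℝ, 0 ≤ t → χ 0 t = 0) ∧
      ∀ (x : X) (d : D) (t : ℝ), 0 ≤ t → ‖S.phi t x d‖ ≤ σ ‖x‖ + χ ‖x‖ t := by
  constructor
  · rintro ⟨hRFC, hREP⟩
    have hdominated : ∀ m : ℕ, ∃ g, ClassKInf g ∧ ∀ r, 0 ≤ r → S.normSup (m + 1) r ≤ g r :=
      fun m => (hRFC.monotone_normSup _).exists_classKInf_ge_s7
        (hREP.tendsto_normSup (by positivity))
    choose G hGK hGle using hdominated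
    obtain ⟨χ, hχc, hχnn, hχK, hχ0, hχG⟩ := exists_chi_dominating_seq G (fun m => (hGK m).1.1)
      (fun m => (hGK m).1.2.2.1) (fun m => (hGK m).1.2.2.2)
    refine ⟨G 0, χ, hGK 0, hχc, hχnn, hχK, hχ0, fun x d t ht => ?_⟩
    calc ‖S.phi t x d‖ ≤ S.normSup (⌊t⌋₊ + 1) ‖x‖ :=
          hRFC.norm_phi_le_normSup ⟨ht, (Nat.lt_floor_add_one t).le⟩ x d
      _ ≤ G ⌊t⌋₊ ‖x‖ := hGle _ _ (norm_nonneg x)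
      _ ≤ G 0 ‖x‖ + χ ‖x‖ t := hχG _ _ _ (norm_nonneg x) (Nat.floor_le ht)
  · rintro ⟨σ, χ, hσ, hχc, -, hχK, hχ0, hbound⟩
    exact ⟨S.rfc_of_bound hσ.1.2.1.monotoneOn hχc hbound,
      S.rep_of_bound hσ.1.2.2.1 (hσ.1.1 0 self_mem_Ici) hχc
        (fun r hr => (hχK r hr).2.1.monotoneOn) hχ0 hbound⟩
end

section
/- Let Σ = (X, 𝒟, φ) be a homogeneous abstract dynamical system, i.e. φ(t, λx, d) = λ φ(t,x,d) for all λ ≥ 0, x ∈ X, d ∈ 𝒟, t ≥ 0. Then 0 is a robust equilibrium point of Σ if and only if Σ is robustly forward complete. -/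
open Filter Set

/-- For homogeneous systems, `0` is a robust equilibrium point iff the system
is robustly forward complete. -/
theorem homogeneous_rep_iff_rfc {X D : Type*} [NormedAddCommGroup X] [NormedSpace ℝ X]
    (S : DynSys X D)
    (hhom : ∀ lam : ℝ, 0 ≤ lam → ∀ (t : ℝ) (x : X) (d : D), 0 ≤ t →
      S.phi t (lam • x) d = lam • S.phi t x d) :
    S.REP ↔ S.RFC := by

  constructor
  · rintro ⟨heq, hrep⟩ C hC τ hτ
    obtain ⟨δ, hδ, hb⟩ := hrep 1 one_pos τ hτ
    refine ⟨C / δ, fun x d t hx ht htτ => ?_⟩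
    have hkey : S.phi t x d = (C / δ) • S.phi t ((δ / C) • x) d := by
      rw [← hhom (C / δ) (by positivity) t ((δ / C) • x) d ht, smul_smul]
      rw [show C / δ * (δ / C) = 1 by field_simp, one_smul]
    have hnx : ‖(δ / C) • x‖ ≤ δ := by
      rw [norm_smul, Real.norm_eq_abs, abs_of_nonneg (by positivity)]
      calc δ / C * ‖x‖ ≤ δ / C * C := by
            apply mul_le_mul_of_nonneg_left hx (by positivity)
        _ = δ := by field_simp
    have := hb t ((δ / C) • x) d ht htτ hnx
    rw [hkey, norm_smul, Real.norm_eq_abs, abs_of_nonneg (by positivity)]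
    calc C / δ * ‖S.phi t ((δ / C) • x) d‖ ≤ C / δ * 1 :=
          mul_le_mul_of_nonneg_left this (by positivity)
      _ = C / δ := mul_one _
  · intro hrfc
    constructor
    · intro t d ht
      have := hhom 0 le_rfl t 0 d ht
      simpa using this
    · intro ε hε h hh
      obtain ⟨B, hB⟩ := hrfc 1 one_pos h hh
      have hB1 : (0:ℝ) < |B| + 1 := by positivity
      refine ⟨ε / (|B| + 1), by positivity, fun t x d ht hth hx => ?_⟩
      set δ := ε / (|B| + 1) with hδdef
      have hδ : (0:ℝ) < δ := by positivity
      have hkey : S.phi t x d = δ • S.phi t ((1 / δ) • x) d := by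
        rw [← hhom δ hδ.le t ((1 / δ) • x) d ht, smul_smul]
        rw [show δ * (1 / δ) = 1 by field_simp, one_smul]
      have hnx : ‖(1 / δ) • x‖ ≤ 1 := by
        rw [norm_smul, Real.norm_eq_abs, abs_of_nonneg (by positivity)]
        calc 1 / δ * ‖x‖ ≤ 1 / δ * δ :=
              mul_le_mul_of_nonneg_left hx (by positivity)
          _ = 1 := by field_simp
      have hbd := hB ((1 / δ) • x) d t hnx ht hth
      rw [hkey, norm_smul, Real.norm_eq_abs, abs_of_nonneg hδ.le]
      calc δ * ‖S.phi t ((1 / δ) • x) d‖ ≤ δ * (|B| + 1) := by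
            apply mul_le_mul_of_nonneg_left _ hδ.le
            exact hbd.trans ((le_abs_self B).trans (by linarith))
        _ = ε := by rw [hδdef]; field_simp
end

section
/- Let Σ = (X, 𝒟, φ) be a forward complete abstract dynamical system and let V : X → [0,∞) be continuous with V(0) = 0, and suppose there exist ψ₂ ∈ K∞ and α ∈ K such that V(x) ≤ ψ₂(‖x‖) for all x and the Dini derivative of V along trajectories satisfies V̇_d(x) ≤ −α(‖x‖) for all x ∈ X, d ∈ 𝒟. Then for every ε > 0 and r > 0, setting τ(ε,r) := (ψ₂(r) + 1)/α(ε), for every x with ‖x‖ ≤ r and every d ∈ 𝒟 there exists t ≤ τ(ε,r) with ‖φ(t,x,d)‖ ≤ ε (i.e., 0 is uniformly globally weakly attractive). -/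
open Filter Set

/-- A non-coercive Lyapunov function for a forward complete system implies
uniform global weak attractivity of `0`, with `τ(ε,r) = (ψ₂(r)+1)/α(ε)`. -/
theorem noncoercive_implies_uniform_weak_attractivity
    {X D : Type*} [NormedAddCommGroup X] (S : DynSys X D)
    (V : X → ℝ) (hVc : Continuous V) (hV0 : V 0 = 0) (hVnn : ∀ x : X, 0 ≤ V x)
    (ψ₂ α : ℝ → ℝ) (hψ₂ : ClassKInf ψ₂) (hα : ClassK α)
    (hub : ∀ x : X, V x ≤ ψ₂ ‖x‖)
    (hdec : ∀ (x : X) (d : D), dini (fun t => V (S.phi t x d)) 0 ≤ -α ‖x‖) :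
    ∀ ε > (0:ℝ), ∀ r > (0:ℝ), ∀ (x : X) (d : D), ‖x‖ ≤ r →
      ∃ t : ℝ, 0 ≤ t ∧ t ≤ (ψ₂ r + 1) / α ε ∧ ‖S.phi t x d‖ ≤ ε := by

  intro ε hε r hr x d hxr
  have hα0 : α 0 = 0 := hα.2.2.1
  have hc : 0 < α ε := by
    have := hα.2.1 (self_mem_Ici) (mem_Ici.2 hε.le) hε
    simpa [hα0] using this
  set c := α ε with hcdef
  set T := (ψ₂ r + 1) / c with hTdef
  have hψr : 0 ≤ ψ₂ r := hψ₂.1.2.2.2 r hr.le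
  have hT : 0 < T := div_pos (by linarith) hc
  by_contra hcon
  push_neg at hcon
  set g : ℝ → ℝ := fun t => V (S.phi t x d) with hgdef
  have hgc : ContinuousOn g (Icc 0 T) :=
    hVc.comp_continuousOn ((S.cont x d).mono Icc_subset_Ici_self)
  have key : g T ≤ V x - c * T := by
    have hmain := image_le_of_liminf_slope_right_le_deriv_boundary
      (f := g) (a := 0) (b := T) (B := fun t => V x - c * t) (B' := fun _ => -c)
      hgc (by simp [hgdef, S.identity])
      (by
        apply Continuous.continuousOn
        continuity)
      (fun s _ => by
        have hd : HasDerivAt (fun t : ℝ => V x - c * t) (-c) s := by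
          simpa using ((hasDerivAt_id s).const_mul c).const_sub (V x)
        exact hd.hasDerivWithinAt)
      ?_ (right_mem_Icc.2 hT.le)
    · exact hmain
    · intro s hs ρ hρ
      have hρ' : -c < ρ := hρ
      set y := S.phi s x d with hy
      have hys : ε < ‖y‖ := hcon s hs.1 hs.2.le
      have hαy : c < α ‖y‖ :=
        hα.2.1 (mem_Ici.2 hε.le) (mem_Ici.2 (norm_nonneg y)) hys
      have hsl : liminf (fun τ => (g (s + τ) - g s) / τ) (nhdsWithin 0 (Ioi 0))
          ≤ -α ‖y‖ := by
        have hEq : ∀ᶠ τ in nhdsWithin (0:ℝ) (Ioi 0),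
            (g (s + τ) - g s) / τ =
            (V (S.phi (0 + τ) y (S.shift s d)) - V (S.phi 0 y (S.shift s d))) / τ := by
          filter_upwards [self_mem_nhdsWithin] with τ hτ
          have h1 : S.phi (0 + τ) y (S.shift s d) = S.phi (s + τ) x d := by
            rw [zero_add, hy, S.cocycle s τ x d hs.1 (le_of_lt (mem_Ioi.1 hτ))]
          have h2 : S.phi 0 y (S.shift s d) = S.phi s x d := S.identity _ _
          rw [h1, h2]
        calc liminf (fun τ => (g (s + τ) - g s) / τ) (nhdsWithin 0 (Ioi 0))
            = dini (fun t => V (S.phi t y (S.shift s d))) 0 := by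
              unfold dini
              exact liminf_congr hEq
          _ ≤ -α ‖y‖ := hdec y (S.shift s d)
      have hfreq : ∃ᶠ τ in nhdsWithin (0:ℝ) (Ioi 0), (g (s + τ) - g s) / τ < ρ := by
        by_cases hb : IsCoboundedUnder (· ≥ ·) (nhdsWithin (0:ℝ) (Ioi 0))
            (fun τ => (g (s + τ) - g s) / τ)
        · exact frequently_lt_of_liminf_lt hb (lt_of_le_of_lt hsl (by linarith))
        · exfalso
          have h0 : liminf (fun τ => (g (s + τ) - g s) / τ) (nhdsWithin (0:ℝ) (Ioi 0)) = 0 := by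
            rw [liminf_eq]
            apply Real.sSup_of_not_bddAbove
            intro hbdd
            obtain ⟨b, hb'⟩ := hbdd
            exact hb ⟨b, fun a ha => hb' (by simpa [eventually_map] using ha)⟩
          rw [h0] at hsl
          have : (0:ℝ) < α ‖y‖ := lt_trans hc hαy
          linarith
      have hmap : map (fun τ => s + τ) (nhdsWithin (0:ℝ) (Ioi 0)) = nhdsWithin s (Ioi s) := by
        have h := (Homeomorph.addLeft s).isEmbedding.map_nhdsWithin_eq (Ioi 0) 0
        simpa using h
      rw [← hmap, frequently_map]
      refine hfreq.mono fun τ hτ => ?_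
      have : slope g s (s + τ) = (g (s + τ) - g s) / τ := by
        rw [slope_def_field, add_sub_cancel_left]
      rw [this]
      exact hτ
  have hgT : 0 ≤ g T := hVnn _
  have hVx : V x ≤ ψ₂ r := le_trans (hub x)
    (hψ₂.1.2.1.monotoneOn (mem_Ici.2 (norm_nonneg x)) (mem_Ici.2 (le_trans (norm_nonneg x) hxr)) hxr)
  have hcT : c * T = ψ₂ r + 1 := by
    rw [hTdef, mul_div_cancel₀ _ (ne_of_gt hc)]
  linarith
end

section
/- For a switched linear system Σ on a Banach space X with piecewise constant switching and evolution operators Φ_d, the following are equivalent: (i) Σ is robustly forward complete; (ii) 0 is a robust equilibrium point of Σ; (iii) there exist M ≥ 1 and ω ∈ ℝ with ‖Φ_d(t,s)‖ ≤ M e^{ω(t−s)} for all switching signals d and t ≥ s ≥ 0. -/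
open Filter Set

/-- An abstract switched linear system on a normed space `X`: a family of
evolution operators `Φ_d(t,s)` indexed by switching signals `d : D`, where the
signal class is closed under time shifts, satisfying the identity, shift and
composition (cocycle) properties of the evolution operators generated by a
switched family of `C₀`-semigroups. -/
structure SwitchedSys (X : Type*) [NormedAddCommGroup X] [NormedSpace ℝ X] (D : Type*) where
  /-- time shift on switching signals -/
  shift : ℝ → D → D
  /-- the evolution operators `Φ_d(t,s)` -/
  Phi : D → ℝ → ℝ → (X →L[ℝ] X)
  identity : ∀ (d : D) (t : ℝ), Phi d t t = ContinuousLinearMap.id ℝ X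
  shift_eq : ∀ (d : D) (s t : ℝ), 0 ≤ s → s ≤ t →
    Phi d t s = Phi (shift s d) (t - s) 0
  comp : ∀ (d : D) (s t : ℝ), 0 ≤ s → s ≤ t →
    Phi d t 0 = (Phi d t s).comp (Phi d s 0)

/-- Robust forward completeness for a switched linear system. -/
def SwitchedSys.RFC {X D : Type*} [NormedAddCommGroup X] [NormedSpace ℝ X]
    (S : SwitchedSys X D) : Prop :=
  ∀ C > (0:ℝ), ∀ τ > (0:ℝ), ∃ B : ℝ, ∀ (x : X) (d : D) (t : ℝ),
    ‖x‖ ≤ C → 0 ≤ t → t ≤ τ → ‖S.Phi d t 0 x‖ ≤ B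

/-- `0` is a robust equilibrium point of a switched linear system. -/
def SwitchedSys.REP {X D : Type*} [NormedAddCommGroup X] [NormedSpace ℝ X]
    (S : SwitchedSys X D) : Prop :=
  ∀ ε > (0:ℝ), ∀ h > (0:ℝ), ∃ δ > (0:ℝ), ∀ (x : X) (d : D) (t : ℝ),
    ‖x‖ ≤ δ → 0 ≤ t → t ≤ h → ‖S.Phi d t 0 x‖ ≤ ε

section Helpers


variable {X D : Type*} [NormedAddCommGroup X] [NormedSpace ℝ X]

lemma opnorm_le_of_ball' (f : X →L[ℝ] X) {δ C : ℝ} (hδ : 0 < δ) (hC : 0 ≤ C)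
    (h : ∀ x : X, ‖x‖ ≤ δ → ‖f x‖ ≤ C) : ‖f‖ ≤ C / δ := by
  refine f.opNorm_le_bound (div_nonneg hC hδ.le) fun x => ?_
  rcases eq_or_ne x 0 with rfl | hx
  · simp only [map_zero, norm_zero, norm_zero, mul_zero]
    exact le_rfl
  · have hxn : 0 < ‖x‖ := norm_pos_iff.mpr hx
    set c : ℝ := δ / ‖x‖ with hc
    have hcpos : 0 < c := div_pos hδ hxn
    have hcy : ‖c • x‖ = δ := by
      rw [norm_smul, Real.norm_of_nonneg hcpos.le, hc, div_mul_cancel₀ _ hxn.ne']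
    have h1 := h (c • x) (le_of_eq hcy)
    rw [map_smul, norm_smul, Real.norm_of_nonneg hcpos.le] at h1
    have h2 : ‖f x‖ ≤ C / c := (le_div_iff₀ hcpos).mpr (by linarith [mul_comm c ‖f x‖])
    calc ‖f x‖ ≤ C / (δ / ‖x‖) := h2
      _ = C / δ * ‖x‖ := by field_simp
      _ ≤ C / δ * ‖x‖ := le_rfl

lemma expbound_of_unit_bound (S : SwitchedSys X D) {M : ℝ} (hM : 1 ≤ M)
    (hb : ∀ (d : D) (t : ℝ), 0 ≤ t → t ≤ 1 → ‖S.Phi d t 0‖ ≤ M) :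
    ∀ (d : D) (s t : ℝ), 0 ≤ s → s ≤ t →
      ‖S.Phi d t s‖ ≤ M * Real.exp (Real.log M * (t - s)) := by
  have hM0 : 0 < M := lt_of_lt_of_le one_pos hM
  have key : ∀ n : ℕ, ∀ (d : D) (t : ℝ), 0 ≤ t → t ≤ n + 1 → ‖S.Phi d t 0‖ ≤ M ^ (n + 1) := by
    intro n
    induction n with
    | zero => intro d t ht ht1; simpa using hb d t ht (by simpa using ht1)
    | succ n ih =>
      intro d t ht ht1
      rcases le_or_gt t ((n : ℝ) + 1) with h | h
      · exact (ih d t ht h).trans (pow_le_pow_right₀ hM (by omega))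
      · have h1t : (1 : ℝ) ≤ t := by
          have : (0:ℝ) ≤ (n:ℝ) := Nat.cast_nonneg n
          linarith
        have hcomp := S.comp d 1 t zero_le_one h1t
        have hshift := S.shift_eq d 1 t zero_le_one h1t
        have hnorm : ‖S.Phi d t 0‖ ≤ ‖S.Phi d t 1‖ * ‖S.Phi d 1 0‖ := by
          rw [hcomp]; exact ContinuousLinearMap.opNorm_comp_le _ _
        have hmid : ‖S.Phi d t 1‖ ≤ M ^ (n + 1) := by
          rw [hshift]
          exact ih (S.shift 1 d) (t - 1) (by linarith) (by push_cast at ht1 ⊢; linarith)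
        have hbase : ‖S.Phi d 1 0‖ ≤ M := hb d 1 zero_le_one le_rfl
        calc ‖S.Phi d t 0‖ ≤ ‖S.Phi d t 1‖ * ‖S.Phi d 1 0‖ := hnorm
          _ ≤ M ^ (n + 1) * M :=
            mul_le_mul hmid hbase (norm_nonneg _) (pow_nonneg hM0.le _)
          _ = M ^ (n + 2) := by ring
  have t0 : ∀ (d : D) (t : ℝ), 0 ≤ t → ‖S.Phi d t 0‖ ≤ M * Real.exp (Real.log M * t) := by
    intro d t ht
    set n := ⌊t⌋₊ with hn
    have h1 : t ≤ (n : ℝ) + 1 := (Nat.lt_floor_add_one t).le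
    have h2 : (n : ℝ) ≤ t := Nat.floor_le ht
    have hkey := key n d t ht h1
    have hMe : M = Real.exp (Real.log M) := (Real.exp_log hM0).symm
    have hpn : M ^ n = Real.exp ((n : ℝ) * Real.log M) := by
      rw [mul_comm, ← Real.rpow_natCast M n, Real.rpow_def_of_pos hM0]
    have hpow : M ^ (n + 1) = M * Real.exp ((n : ℝ) * Real.log M) := by
      rw [pow_succ, mul_comm (M ^ n) M, hpn]
    have hle : Real.exp ((n : ℝ) * Real.log M) ≤ Real.exp (Real.log M * t) := by
      apply Real.exp_le_exp.mpr
      rw [mul_comm (Real.log M) t]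
      exact mul_le_mul_of_nonneg_right h2 (Real.log_nonneg hM)
    calc ‖S.Phi d t 0‖ ≤ M ^ (n + 1) := hkey
      _ = M * Real.exp ((n : ℝ) * Real.log M) := hpow
      _ ≤ M * Real.exp (Real.log M * t) := by nlinarith [Real.exp_pos ((n:ℝ) * Real.log M)]
  intro d s t hs hst
  rw [S.shift_eq d s t hs hst]
  exact t0 _ (t - s) (by linarith)

end Helpers

/-- For switched linear systems on a Banach space, RFC, REP and the uniform
exponential bound on the evolution operators are all equivalent. -/

theorem switched_rfc_rep_expbound_equiv
    {X D : Type*} [NormedAddCommGroup X] [NormedSpace ℝ X] [CompleteSpace X]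
    [Nonempty D] (S : SwitchedSys X D) :
    (S.RFC ↔ S.REP) ∧
    (S.REP ↔ ∃ (M ω : ℝ), 1 ≤ M ∧ ∀ (d : D) (s t : ℝ), 0 ≤ s → s ≤ t →
      ‖S.Phi d t s‖ ≤ M * Real.exp (ω * (t - s))) := by
  set E : Prop := ∃ (M ω : ℝ), 1 ≤ M ∧ ∀ (d : D) (s t : ℝ), 0 ≤ s → s ≤ t →
      ‖S.Phi d t s‖ ≤ M * Real.exp (ω * (t - s)) with hE
  -- RFC → E
  have rfcE : S.RFC → E := by
    intro hR
    obtain ⟨B, hB⟩ := hR 1 one_pos 1 one_pos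
    set M := max B 1 with hMdef
    have hM : 1 ≤ M := le_max_right _ _
    have hb : ∀ (d : D) (t : ℝ), 0 ≤ t → t ≤ 1 → ‖S.Phi d t 0‖ ≤ M := by
      intro d t ht ht1
      have := opnorm_le_of_ball' (S.Phi d t 0) one_pos (le_trans zero_le_one hM)
        (fun x hx => (hB x d t hx ht ht1).trans (le_max_left _ _))
      simpa using this
    exact ⟨M, Real.log M, hM, expbound_of_unit_bound S hM hb⟩
  -- REP → E
  have repE : S.REP → E := by
    intro hP
    obtain ⟨δ, hδ, hb0⟩ := hP 1 one_pos 1 one_pos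
    set M := max (1 / δ) 1 with hMdef
    have hM : 1 ≤ M := le_max_right _ _
    have hb : ∀ (d : D) (t : ℝ), 0 ≤ t → t ≤ 1 → ‖S.Phi d t 0‖ ≤ M := by
      intro d t ht ht1
      have h1 := opnorm_le_of_ball' (S.Phi d t 0) hδ zero_le_one
        (fun x hx => hb0 x d t hx ht ht1)
      exact h1.trans (le_max_left _ _)
    exact ⟨M, Real.log M, hM, expbound_of_unit_bound S hM hb⟩
  -- E → RFC
  have Erfc : E → S.RFC := by
    rintro ⟨M, ω, hM, hb⟩ C hC τ hτ
    refine ⟨M * Real.exp (|ω| * τ) * C, fun x d t hx ht htτ => ?_⟩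
    have hM0 : 0 < M := lt_of_lt_of_le one_pos hM
    have hnorm : ‖S.Phi d t 0‖ ≤ M * Real.exp (ω * t) := by
      simpa using hb d 0 t le_rfl ht
    have hexp : Real.exp (ω * t) ≤ Real.exp (|ω| * τ) := by
      apply Real.exp_le_exp.mpr
      calc ω * t ≤ |ω| * t := mul_le_mul_of_nonneg_right (le_abs_self ω) ht
        _ ≤ |ω| * τ := mul_le_mul_of_nonneg_left htτ (abs_nonneg ω)
    calc ‖S.Phi d t 0 x‖ ≤ ‖S.Phi d t 0‖ * ‖x‖ := (S.Phi d t 0).le_opNorm x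
      _ ≤ (M * Real.exp (|ω| * τ)) * C := by
          apply mul_le_mul _ hx (norm_nonneg x)
            (by positivity)
          exact hnorm.trans (by nlinarith [Real.exp_pos (ω * t), Real.exp_pos (|ω| * τ)])
      _ = M * Real.exp (|ω| * τ) * C := rfl
  -- E → REP
  have Erep : E → S.REP := by
    rintro ⟨M, ω, hM, hb⟩ ε hε h hh
    have hM0 : 0 < M := lt_of_lt_of_le one_pos hM
    set K := M * Real.exp (|ω| * h) with hK
    have hK0 : 0 < K := by positivity
    refine ⟨ε / K, div_pos hε hK0, fun x d t hx ht hth => ?_⟩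
    have hnorm : ‖S.Phi d t 0‖ ≤ K := by
      have h1 : ‖S.Phi d t 0‖ ≤ M * Real.exp (ω * t) := by
        simpa using hb d 0 t le_rfl ht
      refine h1.trans (mul_le_mul_of_nonneg_left (Real.exp_le_exp.mpr ?_) hM0.le)
      calc ω * t ≤ |ω| * t := mul_le_mul_of_nonneg_right (le_abs_self ω) ht
        _ ≤ |ω| * h := mul_le_mul_of_nonneg_left hth (abs_nonneg ω)
    calc ‖S.Phi d t 0 x‖ ≤ ‖S.Phi d t 0‖ * ‖x‖ := (S.Phi d t 0).le_opNorm x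
      _ ≤ K * (ε / K) := mul_le_mul hnorm hx (norm_nonneg x) hK0.le
      _ = ε := by field_simp
  exact ⟨⟨fun h => Erep (rfcE h), fun h => Erfc (repE h)⟩, ⟨repE, Erep⟩⟩
end

section
/- Let α : [0,∞) → [0,∞) be continuous and positive definite (α(r) > 0 for r > 0, α(0) = 0). Then there exists β ∈ KL such that for every continuous function y : [0,∞) → [0,∞) whose right-hand lower Dini derivative satisfies D₊y(t) ≤ −α(y(t)) for all t > 0, one has y(t) ≤ β(y(0), t) for all t ≥ 0. -/
open Filter Set

/-!
Choose an increasing homeomorphism `G` of `ℝ` with `exp s < α (exp s) * G' s`, for instance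
`G s = ∫₀ˢ (eᵘ / α eᵘ + 1) du`. Then `β r t = exp (G⁻¹ (G (log r) - t))` is of class `KL`, and
for fixed `r` it solves `ẋ = -x / G' (log x)`, an equation whose solutions decay strictly slower
than those of `ẋ = -α x`. Mathlib's fencing theorem for right lower Dini derivatives compares
`y` on `[a, t]` with the solution started above `y a`, and `a → 0⁺` gives `y t ≤ β (y 0) t`.
-/

open Real Topology

theorem frequently_slope_lt_of_dini_lt {f : ℝ → ℝ} {x r : ℝ} (hneg : dini f x < 0)
    (hr : dini f x < r) : ∃ᶠ z in 𝓝[>] x, slope f x z < r := by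
  -- `dini f x` is the junk value `0` unless the difference quotients are cobounded
  have hcobdd : IsCoboundedUnder (· ≥ ·) (𝓝[>] 0) (fun τ => (f (x + τ) - f x) / τ) := by
    by_contra h
    exact hneg.ne (by rw [dini, liminf_eq]; exact Real.sSup_of_not_bddAbove h)
  have hshift : Tendsto (x + ·) (𝓝[>] 0) (𝓝[>] x) :=
    tendsto_nhdsWithin_of_tendsto_nhds_of_eventually_within _
      (by simpa using ((continuous_const_add x).tendsto 0).mono_left nhdsWithin_le_nhds)
      (eventually_nhdsWithin_of_forall fun τ (hτ : 0 < τ) => lt_add_of_pos_right x hτ)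
  refine hshift.frequently ?_
  simpa [slope_def_field] using frequently_lt_of_liminf_lt hcobdd hr

theorem le_of_dini_lt_deriv {y B B' : ℝ → ℝ} {a b δ : ℝ} (hy : ContinuousOn y (Icc a b))
    (ha : y a ≤ B a) (hB : ∀ x, HasDerivAt B (B' x) x) (hδB : ∀ x ∈ Icc a b, δ < B x)
    (hneg : ∀ x ∈ Ico a b, δ ≤ y x → dini y x < 0)
    (bound : ∀ x ∈ Ico a b, y x = B x → dini y x < B' x) {x : ℝ} (hx : x ∈ Icc a b) :
    y x ≤ B x := by
  -- Fence `max y δ` rather than `y`: where `y ≤ δ` the value `dini y` may be junk (an infinite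
  -- liminf), while `max y δ` has slopes `0` there.
  set f := fun x => max (y x) δ
  have hf' : ∀ x ∈ Ico a b, ∀ r, (if δ < y x then dini y x else 0) < r →
      ∃ᶠ z in 𝓝[>] x, slope f x z < r := by
    intro x hx r hr
    have hyx : ContinuousWithinAt y (Ioi x) x :=
      (hy x (Ico_subset_Icc_self hx)).mono_of_mem_nhdsWithin (Icc_mem_nhdsGT_of_mem hx)
    split_ifs at hr with hδ
    · refine ((frequently_slope_lt_of_dini_lt (hneg x hx hδ.le) hr).and_eventually
        (hyx.eventually_const_lt hδ)).mono ?_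
      rintro z ⟨hz, hδz⟩
      simpa [f, slope_def_field, max_eq_left hδz.le, max_eq_left hδ.le] using hz
    · rw [not_lt] at hδ
      have hfreq : ∃ᶠ z in 𝓝[>] x, y z ≤ δ := by
        rcases hδ.lt_or_eq with hlt | heq
        · exact (hyx.eventually_lt_const hlt).frequently.mono fun _ => le_of_lt
        · have hdini := hneg x hx heq.ge
          refine ((frequently_slope_lt_of_dini_lt hdini hdini).and_eventually
            self_mem_nhdsWithin).mono ?_
          rintro z ⟨hz, hxz : x < z⟩
          rw [slope_def_field, div_neg_iff] at hz
          rcases hz with ⟨-, hz⟩ | ⟨hz, -⟩ <;> linarith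
      refine hfreq.mono fun z hz => ?_
      simpa [f, slope_def_field, max_eq_right hz, max_eq_right hδ] using hr
  have hbound : ∀ x ∈ Ico a b, f x = B x → (if δ < y x then dini y x else 0) < B' x := by
    intro x hx hfx
    have hδ : δ < y x := by
      by_contra! h
      exact (hδB x (Ico_subset_Icc_self hx)).ne (by simpa [f, max_eq_right h] using hfx)
    rw [if_pos hδ]
    exact bound x hx (by simpa [f, max_eq_left hδ.le] using hfx)
  exact (le_max_left _ _).trans <| image_le_of_liminf_slope_right_lt_deriv_boundary
    (hy.sup continuousOn_const) hf' (max_le ha (hδB a ⟨le_rfl, hx.1.trans hx.2⟩).le) hB hbound hx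

section ExpFlow

variable {G : ℝ ≃o ℝ} {r t : ℝ}

/-- In the coordinate `G ∘ log`, the flow `t ↦ expFlow G r t` is translation at unit speed. -/
noncomputable def expFlow (G : ℝ ≃o ℝ) (r t : ℝ) : ℝ :=
  if 0 < r then exp (G.symm (G (log r) - t)) else 0

theorem expFlow_of_pos (hr : 0 < r) : expFlow G r t = exp (G.symm (G (log r) - t)) := if_pos hr

theorem expFlow_of_nonpos (hr : r ≤ 0) : expFlow G r t = 0 := if_neg hr.not_gt

theorem expFlow_pos (hr : 0 < r) : 0 < expFlow G r t := by
  rw [expFlow_of_pos hr]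
  exact exp_pos _

theorem expFlow_nonneg : 0 ≤ expFlow G r t := by
  unfold expFlow
  split_ifs <;> positivity

theorem expFlow_zero_right (hr : 0 ≤ r) : expFlow G r 0 = r := by
  rcases hr.eq_or_lt with rfl | hr
  · exact expFlow_of_nonpos le_rfl
  · rw [expFlow_of_pos hr, sub_zero, OrderIso.symm_apply_apply, exp_log hr]

theorem expFlow_le (hr : 0 ≤ r) (ht : 0 ≤ t) : expFlow G r t ≤ r := by
  rcases hr.eq_or_lt with rfl | hr
  · exact (expFlow_of_nonpos le_rfl).le
  · rw [expFlow_of_pos hr]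
    refine (exp_le_exp.2 ?_).trans_eq (exp_log hr)
    rw [G.symm_apply_le]
    linarith

theorem antitone_expFlow (G : ℝ ≃o ℝ) (r : ℝ) : Antitone (expFlow G r) := by
  intro t t' htt'
  unfold expFlow
  split_ifs
  · exact exp_le_exp.2 (G.symm.monotone (by linarith))
  · exact le_rfl

theorem strictMonoOn_expFlow (G : ℝ ≃o ℝ) (t : ℝ) :
    StrictMonoOn (fun r => expFlow G r t) (Ici 0) := by
  intro r hr r' hr' hrr'
  rcases (mem_Ici.1 hr).eq_or_lt with rfl | hr
  · simp only [expFlow_of_nonpos le_rfl]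
    exact expFlow_pos hrr'
  · simp only [expFlow_of_pos hr, expFlow_of_pos (hr.trans hrr')]
    exact exp_lt_exp.2 (G.symm.strictMono (sub_lt_sub_right (G.strictMono (log_lt_log hr hrr')) t))

theorem tendsto_expFlow_atTop (hr : 0 < r) : Tendsto (expFlow G r) atTop (𝓝 0) := by
  simp only [funext fun t => expFlow_of_pos (G := G) (t := t) hr, sub_eq_add_neg]
  exact tendsto_exp_atBot.comp <| G.symm.tendsto_atBot.comp <|
    tendsto_atBot_add_const_left _ _ tendsto_neg_atTop_atBot

theorem continuousOn_expFlow (G : ℝ ≃o ℝ) :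
    ContinuousOn (Function.uncurry (expFlow G)) (Ici 0 ×ˢ Ici 0) := by
  rintro ⟨r, t⟩ ⟨hr, ht⟩
  rcases (mem_Ici.1 hr).eq_or_lt with rfl | hr
  · rw [ContinuousWithinAt, Function.uncurry_apply_pair, expFlow_of_nonpos le_rfl]
    exact tendsto_of_tendsto_of_tendsto_of_le_of_le' tendsto_const_nhds
      continuous_fst.continuousWithinAt (Eventually.of_forall fun _ => expFlow_nonneg)
      (eventually_nhdsWithin_of_forall fun p hp => expFlow_le hp.1 hp.2)
  · have hG := G.continuous
    have hGsymm := G.symm.continuous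
    have heq : Function.uncurry (expFlow G) =ᶠ[𝓝 (r, t)]
        fun p => exp (G.symm (G (log p.1) - p.2)) :=
      (continuous_fst.continuousAt.eventually_const_lt hr).mono fun p hp => expFlow_of_pos hp
    refine (ContinuousAt.congr ?_ heq.symm).continuousWithinAt
    fun_prop (disch := exact hr.ne')

theorem classKL_expFlow (G : ℝ ≃o ℝ) : ClassKL (expFlow G) :=
  ⟨fun t ht => ⟨(continuousOn_expFlow G).comp (continuousOn_id.prodMk continuousOn_const)
      fun _ hr => ⟨hr, ht⟩, strictMonoOn_expFlow G t, expFlow_of_nonpos le_rfl,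
      fun _ _ => expFlow_nonneg⟩,
    fun r hr => ⟨(continuousOn_expFlow G).comp (continuousOn_const.prodMk continuousOn_id)
      fun _ ht => ⟨hr.le, ht⟩, (antitone_expFlow G r).antitoneOn _, tendsto_expFlow_atTop hr⟩⟩

theorem hasDerivAt_expFlow {g' : ℝ} (hr : 0 < r)
    (hG : HasDerivAt G g' (G.symm (G (log r) - t))) (hg' : g' ≠ 0) :
    HasDerivAt (expFlow G r) (-(expFlow G r t / g')) t := by
  have hGsymm : HasDerivAt G.symm g'⁻¹ (G (log r) - t) :=
    hG.of_local_left_inverse G.symm.continuous.continuousAt hg'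
      (Eventually.of_forall G.apply_symm_apply)
  simp only [funext fun t => expFlow_of_pos (G := G) (t := t) hr]
  convert (hGsymm.comp_const_sub (G (log r)) t).exp using 1
  ring

end ExpFlow

theorem strictMono_surjective_of_le_deriv {f f' : ℝ → ℝ} {c : ℝ} (hf : ∀ x, HasDerivAt f (f' x) x)
    (hc : 0 < c) (hf' : ∀ x, c ≤ f' x) : StrictMono f ∧ Function.Surjective f := by
  have hlin : Monotone fun x => f x - c * x :=
    monotone_of_hasDerivAt_nonneg (fun x => (hf x).sub ((hasDerivAt_id x).const_mul c))
      fun x => by simpa using hf' x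
  have hcont : Continuous f := continuous_iff_continuousAt.2 fun x => (hf x).continuousAt
  have htop : Tendsto (fun x => f 0 + c * x) atTop atTop :=
    tendsto_atTop_add_const_left _ _ (tendsto_id.const_mul_atTop hc)
  have hbot : Tendsto (fun x => f 0 + c * x) atBot atBot :=
    tendsto_atBot_add_const_left _ _ (tendsto_id.const_mul_atBot hc)
  refine ⟨strictMono_of_hasDerivAt_pos hf fun x => hc.trans_le (hf' x), hcont.surjective ?_ ?_⟩
  · refine tendsto_atTop_mono' _ ?_ htop
    filter_upwards [eventually_ge_atTop 0] with x hx
    have := hlin hx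
    simp only [mul_zero, sub_zero] at this
    linarith
  · refine tendsto_atBot_mono' _ ?_ hbot
    filter_upwards [eventually_le_atBot 0] with x hx
    have := hlin hx
    simp only [mul_zero, sub_zero] at this
    linarith

section Comparison

variable {α : ℝ → ℝ}

theorem exists_orderIso_hasDerivAt (hc : ContinuousOn α (Ici 0))
    (hpos : ∀ r, 0 < r → 0 < α r) :
    ∃ (G : ℝ ≃o ℝ) (G' : ℝ → ℝ), (∀ s, HasDerivAt G (G' s) s) ∧ (∀ s, 0 < G' s) ∧
      ∀ s, exp s < α (exp s) * G' s := by
  set g := fun s => exp s / α (exp s) + 1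
  have hα : ∀ s, 0 < α (exp s) := fun s => hpos _ (exp_pos s)
  have hg : Continuous g := (continuous_exp.div (hc.comp_continuous continuous_exp
    fun s => (exp_pos s).le) fun s => (hα s).ne').add continuous_const
  have hG : ∀ s, HasDerivAt (fun s => ∫ u in 0..s, g u) (g s) s :=
    fun s => (hg.integral_hasStrictDerivAt 0 s).hasDerivAt
  have hg1 : ∀ s, 1 ≤ g s := fun s => le_add_of_nonneg_left (div_nonneg (exp_pos s).le (hα s).le)
  obtain ⟨hmono, hsurj⟩ := strictMono_surjective_of_le_deriv hG one_pos hg1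
  refine ⟨hmono.orderIsoOfSurjective _ hsurj, g, hG, fun s => one_pos.trans_le (hg1 s),
    fun s => ?_⟩
  calc exp s < exp s + α (exp s) := lt_add_of_pos_right _ (hα s)
    _ = α (exp s) * g s := by simp only [g]; field_simp [(hα s).ne']

variable {G : ℝ ≃o ℝ} {G' : ℝ → ℝ} {y : ℝ → ℝ}
  (hG : ∀ s, HasDerivAt G (G' s) s) (hG' : ∀ s, 0 < G' s)
  (hslow : ∀ s, exp s < α (exp s) * G' s) (hpos : ∀ r, 0 < r → 0 < α r)
  (hy : ContinuousOn y (Ici 0)) (hynn : ∀ t, 0 ≤ t → 0 ≤ y t)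
  (hd : ∀ t, 0 < t → dini y t ≤ -α (y t))
include hG hG' hslow hpos hy hynn hd

theorem le_expFlow_sub_of_dini {a t : ℝ} (ha : 0 < a) (hat : a ≤ t) :
    y t ≤ expFlow G (y a + a) (t - a) := by
  set ρ := y a + a
  have hρ : 0 < ρ := by linarith [hynn a ha.le]
  set B := fun x => expFlow G ρ (x - a)
  have hB : ∀ x, HasDerivAt B (-(B x / G' (G.symm (G (log ρ) - (x - a))))) x := fun x =>
    (hasDerivAt_expFlow hρ (hG _) (hG' _).ne').comp_sub_const x a
  refine le_of_dini_lt_deriv (B := B) (δ := B t / 2) (hy.mono fun x hx => ha.le.trans hx.1) ?_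
    hB ?_ ?_ ?_ ⟨hat, le_rfl⟩
  · simp only [B, sub_self, expFlow_zero_right hρ.le, ρ]
    linarith
  · intro x hx
    have := antitone_expFlow G ρ (sub_le_sub_right hx.2 a)
    linarith [expFlow_pos (G := G) (t := t - a) hρ]
  · intro x hx hδ
    have hyx : 0 < y x := (half_pos (expFlow_pos hρ)).trans_le hδ
    exact (hd x (ha.trans_le hx.1)).trans_lt (neg_neg_of_pos (hpos _ hyx))
  · intro x hx hyB
    have hBx : B x = exp (G.symm (G (log ρ) - (x - a))) := expFlow_of_pos hρ
    refine (hd x (ha.trans_le hx.1)).trans_lt ?_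
    rw [hyB, neg_lt_neg_iff, div_lt_iff₀ (hG' _), hBx]
    exact hslow _

theorem le_expFlow_of_dini {t : ℝ} (ht : 0 ≤ t) : y t ≤ expFlow G (y 0) t := by
  rcases ht.eq_or_lt with rfl | ht
  · rw [expFlow_zero_right (hynn 0 le_rfl)]
  have hy0 : Tendsto y (𝓝[>] 0) (𝓝 (y 0)) :=
    (hy 0 self_mem_Ici).tendsto.mono_left (nhdsWithin_mono _ Ioi_subset_Ici_self)
  have harg : Tendsto (fun a => (y a + a, t - a)) (𝓝[>] 0) (𝓝[Ici 0 ×ˢ Ici 0] (y 0, t)) := by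
    refine tendsto_nhdsWithin_iff.2 ⟨?_, ?_⟩
    · have hid : Tendsto (fun a : ℝ => a) (𝓝[>] 0) (𝓝 0) := nhdsWithin_le_nhds
      simpa using (hy0.add hid).prodMk_nhds (tendsto_const_nhds.sub hid)
    · filter_upwards [Ioo_mem_nhdsGT ht] with a ha
      exact ⟨add_nonneg (hynn a ha.1.le) ha.1.le, sub_nonneg.2 ha.2.le⟩
  have hcont := continuousOn_expFlow G (y 0, t) ⟨hynn 0 le_rfl, ht.le⟩
  refine ge_of_tendsto (hcont.tendsto.comp harg) ?_
  filter_upwards [Ioo_mem_nhdsGT ht] with a ha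
  exact le_expFlow_sub_of_dini hG hG' hslow hpos hy hynn hd ha.1 ha.2.le

end Comparison

theorem comparison_principle_general (α : ℝ → ℝ)
    (hc : ContinuousOn α (Ici 0)) (hpos : ∀ r : ℝ, 0 < r → 0 < α r) :
    ∃ β : ℝ → ℝ → ℝ, ClassKL β ∧
      ∀ y : ℝ → ℝ, ContinuousOn y (Ici 0) → (∀ t : ℝ, 0 ≤ t → 0 ≤ y t) →
        (∀ t : ℝ, 0 < t → dini y t ≤ -α (y t)) →
        ∀ t : ℝ, 0 ≤ t → y t ≤ β (y 0) t := by
  obtain ⟨G, G', hG, hG', hslow⟩ := exists_orderIso_hasDerivAt hc hpos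
  exact ⟨expFlow G, classKL_expFlow G, fun y hy hynn hd _ ht =>
    le_expFlow_of_dini hG hG' hslow hpos hy hynn hd ht⟩

/-- Generalized comparison principle: for continuous positive definite `α`
there is `β ∈ KL` bounding every continuous nonnegative function whose Dini
derivative satisfies `D₊y(t) ≤ -α(y(t))`. -/
theorem comparison_principle (α : ℝ → ℝ)
    (hc : ContinuousOn α (Ici 0)) (h0 : α 0 = 0)
    (hnn : ∀ r : ℝ, 0 ≤ r → 0 ≤ α r) (hpos : ∀ r : ℝ, 0 < r → 0 < α r) :
    ∃ β : ℝ → ℝ → ℝ, ClassKL β ∧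
      ∀ y : ℝ → ℝ, ContinuousOn y (Ici 0) → (∀ t : ℝ, 0 ≤ t → 0 ≤ y t) →
        (∀ t : ℝ, 0 < t → dini y t ≤ -α (y t)) →
        ∀ t : ℝ, 0 ≤ t → y t ≤ β (y 0) t :=
  comparison_principle_general α hc hpos
end
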